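/- arXiv:2109.02115 — 6 statements merged into one kernel-verified Lean document; each statement's English description precedes it below -/
import Mathlib

section
/- Let n ≥ 4 be even and let C_n = (V, w) be the n-vertex cycle graph with all edge weights equal to 1 (i.e., w({i,i+1}) = 1 for i = 1,…,n−1, w({n,1}) = 1, and w(e) = 0 for all other e ∈ V^(2)). Then the connectivity linear-query certificate complexity of C_n satisfies con-cert(C_n) ≥ n/4. -/
/-!
Write `n = 2m`. The edges `{j, j+1}` and `{j+m, j+m+1}` of the cycle are antipodal, so giving both
the same perturbation `c_{j mod m}` defines a linear map `ℝ^m → ℝ^(n choose 2)`. If a certificate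
had fewer than `m` rows, this map composed with the query matrix would kill some `c ≠ 0`; scaled so
that `min c = -1`, the weights `1 + c` stay nonnegative, are invisible to the queries, and vanish on
a pair of antipodal edges. Removing two edges disconnects a cycle, so the certificate would accept a
disconnected graph. Hence `con-cert(C_n) ≥ n/2`.
-/

open Finset Matrix

/-- The set of edge slots: 2-element subsets of the vertex set `Fin n`. -/
abbrev EdgeSlot (n : ℕ) := {e : Finset (Fin n) // e.card = 2}

/-- Weight of the cut with shore `S`: sum of weights of edge slots with exactly
one endpoint in `S`. -/
noncomputable def cutWeight (n : ℕ) (w : EdgeSlot n → ℝ) (S : Finset (Fin n)) : ℝ :=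
  ∑ e : EdgeSlot n, if (e.1 ∩ S).card = 1 then w e else 0

/-- `λ(G)`: the minimum cut weight over all shores `∅ ≠ S ⊊ V`. -/
noncomputable def minCutVal (n : ℕ) (w : EdgeSlot n → ℝ) : ℝ :=
  sInf {x : ℝ | ∃ S : Finset (Fin n), S.Nonempty ∧ S ≠ Finset.univ ∧ cutWeight n w S = x}

/-- The at-least-τ linear-query certificate complexity: the least `k` such that some
`k`-row query matrix `A` certifies that every nonnegative `w'` consistent with the
answers on `w` has minimum cut value at least `τ`. -/
noncomputable def atLeastCert (n : ℕ) (τ : ℝ) (w : EdgeSlot n → ℝ) : ℕ :=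
  sInf {k : ℕ | ∃ A : Matrix (Fin k) (EdgeSlot n) ℝ,
    ∀ w' : EdgeSlot n → ℝ, (∀ e, 0 ≤ w' e) → A.mulVec w = A.mulVec w' →
      τ ≤ minCutVal n w'}

/-- The minimum-cut linear-query certificate complexity. -/
noncomputable def mincutCert (n : ℕ) (w : EdgeSlot n → ℝ) : ℕ :=
  sInf {k : ℕ | ∃ A : Matrix (Fin k) (EdgeSlot n) ℝ,
    ∀ w' : EdgeSlot n → ℝ, (∀ e, 0 ≤ w' e) → A.mulVec w = A.mulVec w' →
      minCutVal n w' = minCutVal n w}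

/-- The connectivity linear-query certificate complexity. -/
noncomputable def conCert (n : ℕ) (w : EdgeSlot n → ℝ) : ℕ :=
  sInf {k : ℕ | ∃ A : Matrix (Fin k) (EdgeSlot n) ℝ,
    ∀ w' : EdgeSlot n → ℝ, (∀ e, 0 ≤ w' e) → A.mulVec w = A.mulVec w' →
      (0 < minCutVal n w' ↔ 0 < minCutVal n w)}

/-- Row indices of the universal cut-edge incidence matrix: nonempty sets of
vertices not containing vertex `1` (represented as `0 : Fin n`). -/
abbrev Shore (n : ℕ) [NeZero n] := {S : Finset (Fin n) // S.Nonempty ∧ (0 : Fin n) ∉ S}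

/-- The universal cut-edge incidence matrix `M_n`. -/
noncomputable def Mn (n : ℕ) [NeZero n] : Matrix (Shore n) (EdgeSlot n) ℝ :=
  fun S e => if (e.1 ∩ S.1).card = 1 then 1 else 0

/-- `τ`-cut-rank of a graph: the minimum rank of a matrix `X ≤ M_n` (entrywise)
with every entry of `Xw` at least `τ`. -/
noncomputable def cutRank (n : ℕ) [NeZero n] (τ : ℝ) (w : EdgeSlot n → ℝ) : ℕ :=
  sInf {r : ℕ | ∃ X : Matrix (Shore n) (EdgeSlot n) ℝ,
    (∀ S e, X S e ≤ Mn n S e) ∧ (∀ S, τ ≤ X.mulVec w S) ∧ X.rank = r}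

/-- The weight vector of the `n`-cycle with unit weights. -/
noncomputable def cycleWeight (n : ℕ) [NeZero n] : EdgeSlot n → ℝ :=
  fun e => if ∃ i : Fin n, e.1 = {i, i + 1} then 1 else 0

namespace Fin

variable {n : ℕ} [NeZero n]

theorem val_add_one_of_two_le (hn : 2 ≤ n) (j : Fin n) :
    ((j + 1 : Fin n) : ℕ) = if (j : ℕ) + 1 = n then (0 : ℕ) else (j : ℕ) + 1 := by
  rw [val_add, val_one', Nat.mod_eq_of_lt hn]
  split_ifs with h
  · rw [h, Nat.mod_self]
  · exact Nat.mod_eq_of_lt (by omega)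

theorem ne_add_one_of_two_le (hn : 2 ≤ n) (j : Fin n) : j ≠ j + 1 := by
  have := val_add_one_of_two_le hn j
  rw [Ne, Fin.ext_iff]
  split_ifs at this <;> omega

theorem ne_add_one_add_one_of_three_le (hn : 3 ≤ n) (j : Fin n) : j ≠ j + 1 + 1 := by
  have h₁ := val_add_one_of_two_le (by omega) j
  have h₂ := val_add_one_of_two_le (by omega) (j + 1)
  rw [Ne, Fin.ext_iff]
  split_ifs at h₁ h₂ <;> omega

theorem add_one_mem_Ioc_iff (hn : 2 ≤ n) {a b j : Fin n} (ha : j ≠ a) (hb : j ≠ b) :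
    j + 1 ∈ Ioc a b ↔ j ∈ Ioc a b := by
  have := val_add_one_of_two_le hn j
  rw [Ne, Fin.ext_iff] at ha hb
  simp only [Finset.mem_Ioc, lt_def, le_def]
  split_ifs at this <;> omega

open Fin.NatCast in
theorem exists_mem_add_one_notMem {S : Finset (Fin n)} (hS : S.Nonempty) (hS' : S ≠ univ) :
    ∃ j ∈ S, j + 1 ∉ S := by
  by_contra! hclosed
  obtain ⟨a, ha⟩ := hS
  have hshift : ∀ t : ℕ, a + (t : Fin n) ∈ S := by
    intro t
    induction t with
    | zero => simpa using ha
    | succ t ih => simpa [add_assoc] using hclosed _ ih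
  refine hS' (eq_univ_of_forall fun v => ?_)
  simpa using hshift (v - a).val

end Fin

theorem Finset.card_inter_pair_eq_one_iff {α : Type*} [DecidableEq α] {x y : α} (hxy : x ≠ y)
    (S : Finset α) : (({x, y} : Finset α) ∩ S).card = 1 ↔ (x ∈ S ↔ y ∉ S) := by
  by_cases hx : x ∈ S <;> by_cases hy : y ∈ S <;>
    simp [insert_inter_of_mem, insert_inter_of_notMem, hx, hy, hxy]

section Cuts

variable {n : ℕ} {w : EdgeSlot n → ℝ}

theorem cutWeight_nonneg (hw : ∀ e, 0 ≤ w e) (S : Finset (Fin n)) : 0 ≤ cutWeight n w S :=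
  sum_nonneg fun e _ => by split_ifs <;> simp [hw e]

theorem cutWeight_eq_zero {S : Finset (Fin n)}
    (h : ∀ e : EdgeSlot n, (e.1 ∩ S).card = 1 → w e = 0) : cutWeight n w S = 0 :=
  sum_eq_zero fun e _ => by split_ifs with he <;> simp [h e, he]

theorem minCutVal_le_cutWeight (hw : ∀ e, 0 ≤ w e) {S : Finset (Fin n)} (hS : S.Nonempty)
    (hS' : S ≠ univ) : minCutVal n w ≤ cutWeight n w S :=
  csInf_le ⟨0, by rintro _ ⟨T, -, -, rfl⟩; exact cutWeight_nonneg hw T⟩ ⟨S, hS, hS', rfl⟩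

theorem le_minCutVal (hn : 2 ≤ n) {x : ℝ}
    (h : ∀ S : Finset (Fin n), S.Nonempty → S ≠ univ → x ≤ cutWeight n w S) :
    x ≤ minCutVal n w := by
  have hsingleton : ({⟨0, by omega⟩} : Finset (Fin n)) ≠ univ := fun h => by
    have := congrArg card h
    simp only [card_singleton, card_univ, Fintype.card_fin] at this
    omega
  refine le_csInf ⟨_, _, singleton_nonempty _, hsingleton, rfl⟩ ?_
  rintro _ ⟨S, hS, hS', rfl⟩
  exact h S hS hS'

theorem le_conCert {k : ℕ}
    (h : ∀ (r : ℕ) (A : Matrix (Fin r) (EdgeSlot n) ℝ), (∀ w' : EdgeSlot n → ℝ, (∀ e, 0 ≤ w' e) →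
      A *ᵥ w = A *ᵥ w' → (0 < minCutVal n w' ↔ 0 < minCutVal n w)) → k ≤ r) :
    k ≤ conCert n w := by
  let e := Fintype.equivFin (EdgeSlot n)
  -- Querying every coordinate is a certificate, so the infimum is over a nonempty set.
  have hquery_all : ∀ w' : EdgeSlot n → ℝ, (∀ e, 0 ≤ w' e) →
      (1 : Matrix (EdgeSlot n) (EdgeSlot n) ℝ).submatrix e.symm (Equiv.refl _) *ᵥ w =
        (1 : Matrix (EdgeSlot n) (EdgeSlot n) ℝ).submatrix e.symm (Equiv.refl _) *ᵥ w' →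
      (0 < minCutVal n w' ↔ 0 < minCutVal n w) := by
    intro w' _ hw'
    rw [submatrix_mulVec_equiv, submatrix_mulVec_equiv] at hw'
    simp only [one_mulVec, Equiv.refl_symm, Equiv.coe_refl, Function.comp_id] at hw'
    rw [e.symm.surjective.injective_comp_right hw']
  exact le_csInf ⟨_, _, hquery_all⟩ fun r ⟨A, hA⟩ => h r A hA

end Cuts

theorem exists_mul_eq_neg_one_le {ι : Type*} [Fintype ι] {c : ι → ℝ} (hc : c ≠ 0) :
    ∃ (t : ℝ) (i : ι), t * c i = -1 ∧ ∀ j, -1 ≤ t * c j := by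
  obtain ⟨j₀, hj₀⟩ := Function.ne_iff.1 hc
  obtain ⟨i, -, hi⟩ := exists_max_image univ (fun j => |c j|) ⟨j₀, mem_univ _⟩
  have hci : c i ≠ 0 := fun h => hj₀ <| abs_nonpos_iff.1 <| by simpa [h] using hi j₀ (mem_univ _)
  refine ⟨-(c i)⁻¹, i, by field_simp, fun j => ?_⟩
  have hratio : |c j / c i| ≤ 1 := by
    rw [abs_div]
    exact div_le_one_of_le₀ (hi j (mem_univ _)) (abs_nonneg _)
  rw [neg_mul, inv_mul_eq_div, neg_le_neg_iff]
  exact (le_abs_self _).trans hratio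

section Cycle

variable {n : ℕ} [NeZero n] (hn : 3 ≤ n)

def cycleEdge (j : Fin n) : EdgeSlot n :=
  ⟨{j, j + 1}, card_pair (Fin.ne_add_one_of_two_le (by omega) j)⟩

theorem cycleEdge_injective : Function.Injective (cycleEdge hn) := by
  intro j l h
  have hpair : ({j, j + 1} : Set (Fin n)) = {l, l + 1} := by
    simpa [cycleEdge, ← Finset.coe_inj] using h
  rcases Set.pair_eq_pair_iff.1 hpair with ⟨hjl, -⟩ | ⟨hjl, hlj⟩
  · exact hjl
  · exact absurd (hjl.trans (hlj ▸ rfl)) (Fin.ne_add_one_add_one_of_three_le hn j)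

noncomputable def cycleMatrix : Matrix (EdgeSlot n) (Fin n) ℝ :=
  fun e j => if e = cycleEdge hn j then 1 else 0

theorem cycleMatrix_mulVec_cycleEdge (d : Fin n → ℝ) (j : Fin n) :
    (cycleMatrix hn *ᵥ d) (cycleEdge hn j) = d j := by
  simp [cycleMatrix, mulVec, dotProduct, (cycleEdge_injective hn).eq_iff]

theorem cycleMatrix_mulVec_of_forall_ne (d : Fin n → ℝ) {e : EdgeSlot n}
    (he : ∀ j, e ≠ cycleEdge hn j) : (cycleMatrix hn *ᵥ d) e = 0 := by
  simp [cycleMatrix, mulVec, dotProduct, he]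

theorem cycleMatrix_mulVec_nonneg {d : Fin n → ℝ} (hd : ∀ j, 0 ≤ d j) (e : EdgeSlot n) :
    0 ≤ (cycleMatrix hn *ᵥ d) e := by
  simp only [mulVec, dotProduct]
  exact sum_nonneg fun j _ => mul_nonneg (by unfold cycleMatrix; split_ifs <;> norm_num) (hd j)

theorem cycleWeight_eq_cycleMatrix_mulVec_one : cycleWeight n = cycleMatrix hn *ᵥ 1 := by
  funext e
  by_cases h : ∃ j, e = cycleEdge hn j
  · obtain ⟨j, rfl⟩ := h
    rw [cycleMatrix_mulVec_cycleEdge, cycleWeight, if_pos ⟨j, rfl⟩, Pi.one_apply]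
  · simp only [not_exists] at h
    rw [cycleMatrix_mulVec_of_forall_ne hn _ h, cycleWeight, if_neg]
    rintro ⟨j, hj⟩
    exact h j (Subtype.ext hj)

theorem le_minCutVal_cycleMatrix_mulVec {d : Fin n → ℝ} (hd : ∀ j, 0 ≤ d j) {x : ℝ}
    (hx : ∀ j, x ≤ d j) : x ≤ minCutVal n (cycleMatrix hn *ᵥ d) := by
  refine le_minCutVal (by omega) fun S hS hS' => ?_
  obtain ⟨j, hj, hj'⟩ := Fin.exists_mem_add_one_notMem hS hS'
  have hcross : ((cycleEdge hn j).1 ∩ S).card = 1 :=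
    (card_inter_pair_eq_one_iff (Fin.ne_add_one_of_two_le (by omega) j) S).2 (iff_of_true hj hj')
  calc x ≤ d j := hx j
    _ = if ((cycleEdge hn j).1 ∩ S).card = 1 then
          (cycleMatrix hn *ᵥ d) (cycleEdge hn j) else 0 := by
      rw [if_pos hcross, cycleMatrix_mulVec_cycleEdge]
    _ ≤ cutWeight n (cycleMatrix hn *ᵥ d) S :=
      single_le_sum (f := fun e => if (e.1 ∩ S).card = 1 then (cycleMatrix hn *ᵥ d) e else 0)
        (fun e _ => by split_ifs <;> simp [cycleMatrix_mulVec_nonneg hn hd e]) (mem_univ _)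

theorem cutWeight_cycleMatrix_mulVec_Ioc {d : Fin n → ℝ} {a b : Fin n} (ha : d a = 0)
    (hb : d b = 0) : cutWeight n (cycleMatrix hn *ᵥ d) (Ioc a b) = 0 := by
  refine cutWeight_eq_zero fun e he => ?_
  by_cases h : ∃ j, e = cycleEdge hn j
  · obtain ⟨j, rfl⟩ := h
    rw [cycleMatrix_mulVec_cycleEdge]
    by_contra hj
    have hcross := (card_inter_pair_eq_one_iff (Fin.ne_add_one_of_two_le (by omega) j) _).1 he
    have hinterior : j + 1 ∈ Ioc a b ↔ j ∈ Ioc a b :=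
      Fin.add_one_mem_Ioc_iff (by omega) (fun h => hj (h ▸ ha)) (fun h => hj (h ▸ hb))
    tauto
  · simp only [not_exists] at h
    exact cycleMatrix_mulVec_of_forall_ne hn d h

end Cycle

theorem card_le_conCert_cycleWeight {n : ℕ} [NeZero n] (hn : 3 ≤ n) {ι : Type*} [Fintype ι]
    (f : Fin n → ι) (hf : ∀ i, ∃ a b, a < b ∧ f a = i ∧ f b = i) :
    Fintype.card ι ≤ conCert n (cycleWeight n) := by
  refine le_conCert fun k A hA => ?_
  by_contra! hk
  let L := A.mulVecLin ∘ₗ (cycleMatrix hn).mulVecLin ∘ₗ LinearMap.funLeft ℝ ℝ f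
  obtain ⟨c, hcL, hc⟩ := (Submodule.ne_bot_iff _).1 <| L.ker_ne_bot_of_finrank_lt <| by simpa
  obtain ⟨t, i, hti, ht⟩ := exists_mul_eq_neg_one_le hc
  obtain ⟨a, b, hab, rfl, hb⟩ := hf i
  set d : Fin n → ℝ := 1 + (t • c) ∘ f with hd_def
  have hd : ∀ j, 0 ≤ d j := fun j => by simpa [d, neg_le_iff_add_nonneg'] using ht (f j)
  have hquery : A *ᵥ cycleWeight n = A *ᵥ (cycleMatrix hn *ᵥ d) := by
    have hLc : L (t • c) = 0 := by rw [map_smul, LinearMap.mem_ker.1 hcL, smul_zero]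
    change A *ᵥ (cycleMatrix hn *ᵥ ((t • c) ∘ f)) = 0 at hLc
    rw [hd_def, mulVec_add, mulVec_add, hLc, add_zero, cycleWeight_eq_cycleMatrix_mulVec_one hn]
  have hdisconnected : minCutVal n (cycleMatrix hn *ᵥ d) ≤ 0 := by
    have hS : (Ioc a b).Nonempty := ⟨b, right_mem_Ioc.2 hab⟩
    have hS' : Ioc a b ≠ univ := fun h => by
      simpa using (h.symm ▸ mem_univ (0 : Fin n) : (0 : Fin n) ∈ Ioc a b)
    refine (minCutVal_le_cutWeight (cycleMatrix_mulVec_nonneg hn hd) hS hS').trans_eq ?_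
    exact cutWeight_cycleMatrix_mulVec_Ioc hn (by simp [d, hti]) (by simp [d, hb, hti])
  have hconnected : 0 < minCutVal n (cycleWeight n) := by
    rw [cycleWeight_eq_cycleMatrix_mulVec_one hn]
    exact one_pos.trans_le <|
      le_minCutVal_cycleMatrix_mulVec hn (fun _ => zero_le_one) fun _ => le_rfl
  linarith [(hA _ (cycleMatrix_mulVec_nonneg hn hd) hquery).2 hconnected]

/-- The connectivity linear-query certificate complexity of the unit-weight
`n`-cycle (for `n ≥ 4` even) is at least `n/4`. -/
theorem con_cert_cycle_lower_bound (n : ℕ) [NeZero n] (hn4 : 4 ≤ n) (hne : Even n) :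
    (n : ℝ) / 4 ≤ (conCert n (cycleWeight n) : ℝ) := by
  obtain ⟨m, hm⟩ := hne
  let f : Fin n → Fin m := fun j => ⟨j % m, Nat.mod_lt _ (by omega)⟩
  have hf : ∀ i, ∃ a b, a < b ∧ f a = i ∧ f b = i := fun i =>
    ⟨⟨i, by omega⟩, ⟨i + m, by omega⟩, Fin.mk_lt_mk.2 (by omega), by simp [f, Nat.mod_eq_of_lt i.2],
      by simp [f, Nat.mod_eq_of_lt i.2]⟩
  have hm_le : m ≤ conCert n (cycleWeight n) :=
    (Fintype.card_fin m).symm.trans_le (card_le_conCert_cycleWeight (by omega) f hf)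
  have hn : (n : ℝ) = m + m := by exact_mod_cast hm
  have hm_le' : (m : ℝ) ≤ conCert n (cycleWeight n) := by exact_mod_cast hm_le
  linarith
end

section
/- Let G = (V, w) be an n-vertex weighted graph and let τ ∈ ℝ satisfy 0 ≤ τ ≤ λ(G). Then at-least-τ-cert(G) = τ-cut-rank(G). -/
/-!
A matrix `X ≤ M_n` with `X w ≥ τ` factors through its rank as `X = B A`, and then `A` is a
certificate: `A w = A w'` forces `X w' = X w ≥ τ`, and for `w' ≥ 0` the bound `X ≤ M_n` turns this
into "every cut of `w'` weighs at least `τ`". Conversely, if `A` is a certificate, then for each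
shore `S` the linear program `min {M_S x : x ≥ 0, A x = A w}` has value at least `τ`, so LP
duality gives `y_S` with `y_Sᵀ A ≤ M_S` and `y_Sᵀ A w ≥ τ`; the rows `y_Sᵀ A` form an admissible
`X` of rank at most that of `A`. LP duality is Farkas' lemma, which follows from the separation
theorem for closed cones once finitely generated cones are known to be closed, and these are by
conic Carathéodory finite unions of simplicial cones.
-/

open Finset Matrix

section ConicCaratheodory

variable {ι E : Type*} [AddCommGroup E] [Module ℝ E]

theorem exists_nonneg_sub_mul_eq_zero {s : Finset ι} {μ c : ι → ℝ} (hμ : ∀ i ∈ s, 0 ≤ μ i)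
    (hc : ∃ i ∈ s, 0 < c i) :
    ∃ r : ℝ, (∀ i ∈ s, 0 ≤ μ i - r * c i) ∧ ∃ j ∈ s, μ j - r * c j = 0 := by
  classical
  obtain ⟨j, hj, hmin⟩ := (s.filter (0 < c ·)).exists_min_image (fun i => μ i / c i)
    (let ⟨i, hi, hci⟩ := hc; ⟨i, mem_filter.mpr ⟨hi, hci⟩⟩)
  obtain ⟨hjs, hcj⟩ := mem_filter.mp hj
  refine ⟨μ j / c j, fun i hi => ?_, j, hjs, by field_simp; ring⟩
  rcases lt_or_ge 0 (c i) with hci | hci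
  · have := hmin i (mem_filter.mpr ⟨hi, hci⟩)
    rw [div_le_div_iff₀ hcj hci] at this
    rw [div_mul_eq_mul_div, sub_nonneg, div_le_iff₀ hcj]
    linarith
  · nlinarith [hμ i hi, hμ j hjs, div_nonneg (hμ j hjs) hcj.le]

theorem exists_linearIndepOn_nonneg_sum_eq (v : ι → E) (s : Finset ι) (μ : ι → ℝ)
    (hμ : ∀ i ∈ s, 0 ≤ μ i) :
    ∃ t ⊆ s, LinearIndepOn ℝ v (t : Set ι) ∧
      ∃ ν : ι → ℝ, (∀ i ∈ t, 0 ≤ ν i) ∧ ∑ i ∈ t, ν i • v i = ∑ i ∈ s, μ i • v i := by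
  classical
  induction s using Finset.strongInduction generalizing μ with
  | H s ih =>
  by_cases hli : LinearIndepOn ℝ v (s : Set ι)
  · exact ⟨s, subset_rfl, hli, μ, hμ, rfl⟩
  obtain ⟨f, hf, i₀, hi₀, hfi₀⟩ := not_linearIndepOn_finset_iff.mp hli
  obtain ⟨c, hc, hcpos⟩ : ∃ c : ι → ℝ, ∑ i ∈ s, c i • v i = 0 ∧ ∃ i ∈ s, 0 < c i := by
    rcases hfi₀.lt_or_gt with hneg | hpos
    · exact ⟨-f, by simp [neg_smul, hf], i₀, hi₀, by simpa using hneg⟩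
    · exact ⟨f, hf, i₀, hi₀, hpos⟩
  obtain ⟨r, hr, j, hj, hrj⟩ := exists_nonneg_sub_mul_eq_zero hμ hcpos
  have hsum : ∑ i ∈ s.erase j, (μ i - r * c i) • v i = ∑ i ∈ s, μ i • v i := by
    rw [sum_erase _ (by rw [hrj, zero_smul])]
    simp only [sub_smul, mul_smul, sum_sub_distrib, ← smul_sum, hc, smul_zero, sub_zero]
  obtain ⟨t, hts, htli, ν, hν, hνsum⟩ :=
    ih (s.erase j) (erase_ssubset hj) _ (fun i hi => hr i (mem_of_mem_erase hi))
  exact ⟨t, hts.trans (erase_subset j s), htli, ν, hν, hνsum.trans hsum⟩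

end ConicCaratheodory

section ClosedCone

variable {ι E : Type*} [Fintype ι] [AddCommGroup E] [Module ℝ E]

theorem PointedCone.mem_hull_range_iff {v : ι → E} {x : E} :
    x ∈ PointedCone.hull ℝ (Set.range v) ↔ ∃ μ : ι → ℝ, 0 ≤ μ ∧ ∑ i, μ i • v i = x := by
  rw [Submodule.mem_span_range_iff_exists_fun]
  constructor
  · rintro ⟨c, rfl⟩
    exact ⟨fun i => c i, fun i => (c i).2, by simp only [Nonneg.coe_smul]⟩
  · rintro ⟨μ, hμ, rfl⟩
    exact ⟨fun i => ⟨μ i, hμ i⟩, by simp only [Nonneg.mk_smul]⟩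

variable [TopologicalSpace E] [IsTopologicalAddGroup E] [ContinuousSMul ℝ E] [T2Space E]

theorem PointedCone.isClosed_hull_range_of_linearIndependent {v : ι → E}
    (hv : LinearIndependent ℝ v) : IsClosed (PointedCone.hull ℝ (Set.range v) : Set E) := by
  have hcone : (PointedCone.hull ℝ (Set.range v) : Set E) =
      Fintype.linearCombination ℝ v '' Set.Ici 0 := by
    ext x
    simp [PointedCone.mem_hull_range_iff, Fintype.linearCombination_apply]
  rw [hcone]
  exact (LinearMap.isClosedEmbedding_of_injective (LinearMap.ker_eq_bot.mpr
    (linearIndependent_iff_injective_fintypeLinearCombination.mp hv))).isClosedMap _ isClosed_Ici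

theorem PointedCone.isClosed_hull_range (v : ι → E) :
    IsClosed (PointedCone.hull ℝ (Set.range v) : Set E) := by
  have hunion : (PointedCone.hull ℝ (Set.range v) : Set E) =
      ⋃ (t : Finset ι) (_ : LinearIndepOn ℝ v (t : Set ι)),
        (PointedCone.hull ℝ (v '' t) : Set E) := by
    refine Set.Subset.antisymm (fun x hx => ?_) (Set.iUnion₂_subset fun t _ =>
      Submodule.span_mono (Set.image_subset_range v t))
    obtain ⟨μ, hμ, rfl⟩ := PointedCone.mem_hull_range_iff.mp hx
    obtain ⟨t, -, htli, ν, hν, hνsum⟩ :=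
      exists_linearIndepOn_nonneg_sum_eq v univ μ (fun i _ => hμ i)
    refine Set.mem_iUnion₂.mpr ⟨t, htli, hνsum ▸ Submodule.sum_mem _ fun i hi => ?_⟩
    exact PointedCone.smul_mem _ (hν i hi) (PointedCone.subset_hull (Set.mem_image_of_mem v hi))
  rw [hunion]
  refine isClosed_iUnion_of_finite fun t => isClosed_iUnion_of_finite fun htli => ?_
  rw [Set.image_eq_range]
  exact PointedCone.isClosed_hull_range_of_linearIndependent htli

end ClosedCone

section Farkas

variable {ι m k : Type*} [Fintype ι] [Fintype m] [Fintype k]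

theorem Matrix.exists_nonneg_vecMul_eq_or_exists_mulVec_nonneg (B : Matrix ι m ℝ) (c : m → ℝ) :
    (∃ μ, 0 ≤ μ ∧ μ ᵥ* B = c) ∨ ∃ x, 0 ≤ B *ᵥ x ∧ c ⬝ᵥ x < 0 := by
  classical
  by_cases hc : c ∈ PointedCone.hull ℝ (Set.range B)
  · obtain ⟨μ, hμ, hμc⟩ := PointedCone.mem_hull_range_iff.mp hc
    exact Or.inl ⟨μ, hμ, by rw [vecMul_eq_sum, ← hμc]⟩
  obtain ⟨f, hf, hfc⟩ := ProperCone.hyperplane_separation_point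
    ⟨_, PointedCone.isClosed_hull_range B⟩ hc
  set x := (dotProductEquiv ℝ m).symm f.toLinearMap
  have hf_apply (u : m → ℝ) : f u = u ⬝ᵥ x := by
    rw [dotProduct_comm]
    exact (LinearMap.congr_fun ((dotProductEquiv ℝ m).apply_symm_apply f.toLinearMap) u).symm
  refine Or.inr ⟨x, fun i => ?_, by rwa [← hf_apply]⟩
  rw [Pi.zero_apply, mulVec, ← hf_apply]
  exact hf _ (PointedCone.subset_hull (Set.mem_range_self i))

theorem Matrix.exists_vecMul_le_or_exists_nonneg_mulVec_eq_zero (A : Matrix k m ℝ) (c : m → ℝ) :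
    (∃ y, y ᵥ* A ≤ c) ∨ ∃ x, 0 ≤ x ∧ A *ᵥ x = 0 ∧ c ⬝ᵥ x < 0 := by
  classical
  rcases exists_nonneg_vecMul_eq_or_exists_mulVec_nonneg
    (fromRows (fromRows A (-A)) (1 : Matrix m m ℝ)) c with ⟨μ, hμ, hμc⟩ | ⟨x, hx, hxc⟩
  · refine Or.inl ⟨μ ∘ Sum.inl ∘ Sum.inl - μ ∘ Sum.inl ∘ Sum.inr, fun q => ?_⟩
    have hy : (μ ∘ Sum.inl ∘ Sum.inl - μ ∘ Sum.inl ∘ Sum.inr) ᵥ* A = c - μ ∘ Sum.inr := by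
      rw [← hμc, vecMul_fromRows, vecMul_fromRows, vecMul_one, vecMul_neg, sub_vecMul]
      abel
    simpa [hy] using hμ (Sum.inr q)
  · refine Or.inr ⟨x, fun q => ?_, funext fun j => ?_, hxc⟩
    · simpa using hx (Sum.inr q)
    · have h₁ := hx (Sum.inl (Sum.inl j))
      have h₂ := hx (Sum.inl (Sum.inr j))
      simp only [fromRows_mulVec, neg_mulVec, Sum.elim_inl, Sum.elim_inr, Pi.zero_apply,
        Pi.neg_apply] at h₁ h₂ ⊢
      linarith

theorem Matrix.exists_vecMul_le_of_forall_nonneg_mulVec_eq (A : Matrix k m ℝ) (b : k → ℝ)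
    {c : m → ℝ} (hc : 0 ≤ c) (τ : ℝ) (h : ∀ x, 0 ≤ x → A *ᵥ x = b → τ ≤ c ⬝ᵥ x) :
    ∃ y, y ᵥ* A ≤ c ∧ τ ≤ y ⬝ᵥ b := by
  -- Farkas for `[A | -b]`: a certificate `(x, t)` against `y ᵥ* A ≤ c, y ⬝ᵥ b ≥ τ` has either
  -- `t > 0`, and then `x / t` violates `h`, or `t = 0`, which `c ≥ 0` rules out.
  rcases (fromCols A (replicateCol Unit (-b))).exists_vecMul_le_or_exists_nonneg_mulVec_eq_zero
    (Sum.elim c fun _ => -τ) with ⟨y, hy⟩ | ⟨z, hz, hAz, hcz⟩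
  · refine ⟨y, fun q => by simpa using hy (Sum.inl q), ?_⟩
    simpa only [vecMul, dotProduct, fromCols_apply_inr, replicateCol_apply, Pi.neg_apply, mul_neg,
      sum_neg_distrib, Sum.elim_inr, neg_le_neg_iff] using hy (Sum.inr ())
  obtain ⟨x, t, rfl⟩ : ∃ x t, z = Sum.elim x fun _ : Unit => t :=
    ⟨z ∘ Sum.inl, z (Sum.inr ()), by ext (_ | _) <;> rfl⟩
  have hx : 0 ≤ x := fun q => hz (Sum.inl q)
  have hAx : A *ᵥ x = t • b := by
    rw [fromCols_mulVec_sumElim, add_eq_zero_iff_eq_neg] at hAz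
    rw [hAz]
    ext j
    simp [mulVec, dotProduct, replicateCol_apply, mul_comm]
  have hcx : c ⬝ᵥ x < τ * t := by
    rw [sumElim_dotProduct_sumElim] at hcz
    simp only [dotProduct, Finset.univ_unique, sum_singleton, neg_mul] at hcz
    simp only [dotProduct]
    linarith
  exfalso
  rcases (hz (Sum.inr ())).eq_or_lt with ht | ht
  · simp only [Sum.elim_inr, Pi.zero_apply] at ht
    rw [← ht, mul_zero] at hcx
    exact (dotProduct_nonneg_of_nonneg hc hx).not_gt hcx
  · simp only [Sum.elim_inr, Pi.zero_apply] at ht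
    have := h (t⁻¹ • x) (smul_nonneg (inv_nonneg.mpr ht.le) hx)
      (by rw [mulVec_smul, hAx, smul_smul, inv_mul_cancel₀ ht.ne', one_smul])
    rw [dotProduct_smul, smul_eq_mul, le_inv_mul_iff₀ ht] at this
    linarith

end Farkas

theorem Matrix.exists_eq_mul_of_rank {K m n : Type*} [Field K] [Fintype n] [Finite m]
    (X : Matrix m n K) :
    ∃ (B : Matrix m (Fin X.rank) K) (A : Matrix (Fin X.rank) n K), X = B * A := by
  have hrow (i : m) : X i ∈ Submodule.span K (Set.range X.row) := Submodule.subset_span ⟨i, rfl⟩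
  let b := Module.finBasisOfFinrankEq K _ X.rank_eq_finrank_span_row.symm
  refine ⟨.of fun i j => b.repr ⟨X i, hrow i⟩ j, .of fun j => (b j : n → K), ?_⟩
  ext i e
  have := congrArg (fun u : Submodule.span K (Set.range X.row) => (u : n → K) e)
    (b.sum_repr ⟨X i, hrow i⟩)
  simp only [Submodule.coe_sum, Submodule.coe_smul, Finset.sum_apply, Pi.smul_apply,
    smul_eq_mul] at this
  rw [mul_apply, ← this]
  rfl

section CutCertificates

variable {n : ℕ}

def IsAtLeastCertificate (n : ℕ) (τ : ℝ) (w : EdgeSlot n → ℝ) {k : ℕ}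
    (A : Matrix (Fin k) (EdgeSlot n) ℝ) : Prop :=
  ∀ w' : EdgeSlot n → ℝ, (∀ e, 0 ≤ w' e) → A.mulVec w = A.mulVec w' → τ ≤ minCutVal n w'

def IsCutRankWitness (n : ℕ) [NeZero n] (τ : ℝ) (w : EdgeSlot n → ℝ)
    (X : Matrix (Shore n) (EdgeSlot n) ℝ) : Prop :=
  (∀ S e, X S e ≤ Mn n S e) ∧ ∀ S, τ ≤ X.mulVec w S

theorem cutWeight_eq_mulVec [NeZero n] (w : EdgeSlot n → ℝ) (S : Shore n) :
    cutWeight n w S.1 = (Mn n *ᵥ w) S := by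
  refine sum_congr rfl fun e _ => ?_
  simp only [Mn]
  split_ifs <;> simp

theorem Mn_nonneg [NeZero n] (S : Shore n) : 0 ≤ Mn n S := fun e => by
  simp only [Mn, Pi.zero_apply]
  split_ifs <;> norm_num

theorem cutWeight_compl (w : EdgeSlot n → ℝ) (S : Finset (Fin n)) :
    cutWeight n w Sᶜ = cutWeight n w S := by
  refine sum_congr rfl fun e _ => ?_
  have hcard : (e.1 ∩ S).card + (e.1 ∩ Sᶜ).card = 2 := by
    rw [compl_eq_univ_sdiff, ← inter_sdiff_assoc, inter_univ, card_inter_add_card_sdiff, e.2]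
  exact if_congr (by omega) rfl rfl

theorem Shore.ne_univ [NeZero n] (S : Shore n) : S.1 ≠ univ :=
  fun h => S.2.2 (h ▸ mem_univ 0)

theorem minCutVal_le_cutWeight_s1 [NeZero n] {w : EdgeSlot n → ℝ} (hw : ∀ e, 0 ≤ w e)
    (S : Shore n) : minCutVal n w ≤ cutWeight n w S.1 := by
  refine csInf_le ⟨0, ?_⟩ ⟨S.1, S.2.1, S.ne_univ, rfl⟩
  rintro x ⟨T, -, -, rfl⟩
  exact sum_nonneg fun e _ => by split_ifs <;> simp [hw e]

/-- Every proper cut is the cut of a shore, up to complementation. When `n = 1` there are no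
proper cuts and both minimum cut values are the junk value `sInf ∅ = 0`. -/
theorem le_minCutVal_of_forall_shore [NeZero n] {τ : ℝ} {w w' : EdgeSlot n → ℝ}
    (hτ : τ ≤ minCutVal n w) (h : ∀ S : Shore n, τ ≤ cutWeight n w' S.1) :
    τ ≤ minCutVal n w' := by
  by_cases hcut : ∃ S : Finset (Fin n), S.Nonempty ∧ S ≠ univ
  · obtain ⟨S₀, hS₀, hS₀'⟩ := hcut
    refine le_csInf ⟨_, S₀, hS₀, hS₀', rfl⟩ ?_
    rintro x ⟨S, hS, hS', rfl⟩
    by_cases h0 : (0 : Fin n) ∈ S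
    · rw [← cutWeight_compl]
      exact h ⟨Sᶜ, nonempty_iff_ne_empty.mpr (by rwa [Ne, compl_eq_empty_iff]), by simpa using h0⟩
    · exact h ⟨S, hS, h0⟩
  · push Not at hcut
    have hempty (u : EdgeSlot n → ℝ) : minCutVal n u = sInf ∅ := by
      refine congrArg sInf (Set.eq_empty_of_forall_notMem ?_)
      rintro x ⟨S, hS, hS', -⟩
      exact hS' (hcut S hS)
    rwa [hempty, ← hempty w]

variable [NeZero n] {τ : ℝ} {w : EdgeSlot n → ℝ}

theorem IsCutRankWitness.isAtLeastCertificate {k : ℕ} {X : Matrix (Shore n) (EdgeSlot n) ℝ}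
    {B : Matrix (Shore n) (Fin k) ℝ} {A : Matrix (Fin k) (EdgeSlot n) ℝ}
    (hX : IsCutRankWitness n τ w X) (hXA : X = B * A) (hτ : τ ≤ minCutVal n w) :
    IsAtLeastCertificate n τ w A := by
  intro w' hw' hAw
  refine le_minCutVal_of_forall_shore hτ fun S => ?_
  have hXw : X *ᵥ w = X *ᵥ w' := by rw [hXA, ← mulVec_mulVec, ← mulVec_mulVec, hAw]
  calc τ ≤ (X *ᵥ w) S := hX.2 S
    _ = (X *ᵥ w') S := by rw [hXw]
    _ ≤ (Mn n *ᵥ w') S := dotProduct_le_dotProduct_of_nonneg_right (hX.1 S) hw'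
    _ = cutWeight n w' S.1 := (cutWeight_eq_mulVec w' S).symm

theorem IsAtLeastCertificate.exists_vecMul_le_Mn {k : ℕ} {A : Matrix (Fin k) (EdgeSlot n) ℝ}
    (hA : IsAtLeastCertificate n τ w A) (S : Shore n) :
    ∃ y, y ᵥ* A ≤ Mn n S ∧ τ ≤ y ⬝ᵥ (A *ᵥ w) :=
  A.exists_vecMul_le_of_forall_nonneg_mulVec_eq _ (Mn_nonneg S) τ fun x hx hAx =>
    calc τ ≤ minCutVal n x := hA x hx hAx.symm
      _ ≤ cutWeight n x S.1 := minCutVal_le_cutWeight_s1 hx S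
      _ = Mn n S ⬝ᵥ x := cutWeight_eq_mulVec x S

theorem IsAtLeastCertificate.exists_isCutRankWitness {k : ℕ}
    {A : Matrix (Fin k) (EdgeSlot n) ℝ} (hA : IsAtLeastCertificate n τ w A) :
    ∃ X, IsCutRankWitness n τ w X ∧ X.rank ≤ k := by
  choose y hyA hyw using hA.exists_vecMul_le_Mn
  refine ⟨of y * A, ⟨fun S e => hyA S e, fun S => ?_⟩, ?_⟩
  · rw [← mulVec_mulVec]
    exact hyw S
  · exact (rank_mul_le_right _ A).trans (A.rank_le_card_height.trans_eq (Fintype.card_fin k))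

end CutCertificates

theorem atLeastCert_eq_cutRank_general (n : ℕ) [NeZero n] (w : EdgeSlot n → ℝ)
    (τ : ℝ) (hτ : τ ≤ minCutVal n w) :
    atLeastCert n τ w = cutRank n τ w := by
  refine csInf_eq_csInf_of_forall_exists_le ?_ ?_
  · rintro k ⟨A, hA⟩
    obtain ⟨X, hX, hXk⟩ := IsAtLeastCertificate.exists_isCutRankWitness hA
    exact ⟨X.rank, ⟨X, hX.1, hX.2, rfl⟩, hXk⟩
  · rintro r ⟨X, hXM, hXw, rfl⟩
    obtain ⟨B, A, hXA⟩ := X.exists_eq_mul_of_rank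
    exact ⟨X.rank, ⟨A, IsCutRankWitness.isAtLeastCertificate ⟨hXM, hXw⟩ hXA hτ⟩, le_rfl⟩

/-- For any `n`-vertex weighted graph `G = (V, w)` and `0 ≤ τ ≤ λ(G)`,
`at-least-τ-cert(G) = τ-cut-rank(G)`. -/
theorem atLeastCert_eq_cutRank (n : ℕ) [NeZero n] (w : EdgeSlot n → ℝ)
    (hw : ∀ e, 0 ≤ w e) (τ : ℝ) (hτ0 : 0 ≤ τ) (hτ : τ ≤ minCutVal n w) :
    atLeastCert n τ w = cutRank n τ w :=
  atLeastCert_eq_cutRank_general n w τ hτ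
end

section
/- Let G = (V, w) be a connected n-vertex weighted graph (i.e., λ(G) > 0). Then con-cert(G) equals the infimum over real τ with 0 < τ ≤ λ(G) of at-least-τ-cert(G); moreover this infimum is attained, i.e., there exists τ with 0 < τ ≤ λ(G) such that con-cert(G) = at-least-τ-cert(G). -/
open Finset Matrix

section Cone

variable {m ι : Type*} [Fintype m] [Fintype ι]

/-- Conic Carathéodory: any nonnegative combination of the columns of `A` can be rewritten
as a nonnegative combination supported on a set of linearly independent columns. -/
lemma exists_indep_rep (A : Matrix m ι ℝ) :
    ∀ N : ℕ, ∀ v : ι → ℝ, (∀ e, 0 ≤ v e) →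
      (Finset.univ.filter fun e => v e ≠ 0).card ≤ N →
      ∃ v' : ι → ℝ, (∀ e, 0 ≤ v' e) ∧ A.mulVec v' = A.mulVec v ∧
        LinearIndependent ℝ (fun j : {e : ι // v' e ≠ 0} => fun i => A i j.1) := by
  classical
  intro N
  induction N with
  | zero =>
    intro v hv hcard
    have hz : ∀ e, v e = 0 := by
      intro e; by_contra h
      have he : e ∈ Finset.univ.filter fun e => v e ≠ 0 := by simp [h]
      have := Finset.card_pos.mpr ⟨e, he⟩; omega
    refine ⟨v, hv, rfl, ?_⟩
    have : IsEmpty {e : ι // v e ≠ 0} := ⟨fun j => j.2 (hz j.1)⟩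
    exact linearIndependent_empty_type
  | succ N ih =>
    intro v hv hcard
    by_cases hind : LinearIndependent ℝ (fun j : {e : ι // v e ≠ 0} => fun i => A i j.1)
    · exact ⟨v, hv, rfl, hind⟩
    · obtain ⟨g, hgsum, j0, hj0⟩ := Fintype.not_linearIndependent_iff.mp hind
      set g₁ : {e : ι // v e ≠ 0} → ℝ := if 0 < g j0 then g else -g with hg₁
      have hsum₁ : ∑ j, g₁ j • (fun i => A i j.1) = 0 := by
        by_cases h : 0 < g j0 <;>
          simp [hg₁, h, hgsum, neg_smul, Finset.sum_neg_distrib]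
      have hpos₁ : 0 < g₁ j0 := by
        by_cases h : 0 < g j0
        · simpa [hg₁, h] using h
        · have : g j0 < 0 := lt_of_le_of_ne (not_lt.mp h) hj0
          simpa [hg₁, h] using this
      set μ : ι → ℝ := fun e => if h : v e ≠ 0 then g₁ ⟨e, h⟩ else 0 with hμ
      have hμv : ∀ e, μ e ≠ 0 → v e ≠ 0 := by
        intro e hme
        by_contra h
        simp [hμ, h] at hme
      have hμsum : ∀ i, ∑ e, A i e * μ e = 0 := by
        intro i
        have h1 : ∑ e, A i e * μ e
            = ∑ e ∈ Finset.univ.filter fun e => v e ≠ 0, A i e * μ e := by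
          refine (Finset.sum_subset (Finset.filter_subset _ _) ?_).symm
          intro e _ he
          have : ¬ v e ≠ 0 := by simpa using he
          simp [hμ, this]
        have h2 : ∑ e ∈ Finset.univ.filter (fun e => v e ≠ 0), A i e * μ e
            = ∑ j : {e : ι // v e ≠ 0}, A i j.1 * μ j.1 :=
          Finset.sum_subtype _ (by simp) _
        have h3 : ∑ j : {e : ι // v e ≠ 0}, A i j.1 * μ j.1
            = ∑ j : {e : ι // v e ≠ 0}, g₁ j * A i j.1 := by
          refine Finset.sum_congr rfl fun j _ => ?_
          simp [hμ, j.2, mul_comm]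
        have h4 : ∑ j : {e : ι // v e ≠ 0}, g₁ j * A i j.1 = 0 := by
          have := congrFun hsum₁ i
          simpa [Finset.sum_apply] using this
        rw [h1, h2, h3, h4]
      set F : Finset ι := Finset.univ.filter fun e => 0 < μ e with hF
      have hFne : F.Nonempty := by
        refine ⟨j0.1, ?_⟩
        have : μ j0.1 = g₁ j0 := by simp [hμ, j0.2]
        simp [hF, this, hpos₁]
      have hμposF : ∀ e ∈ F, 0 < μ e := by intro e he; simpa [hF] using he
      set t : ℝ := F.inf' hFne (fun e => v e / μ e) with ht
      have ht0 : 0 ≤ t := by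
        refine Finset.le_inf' hFne _ fun e he => ?_
        exact div_nonneg (hv e) (le_of_lt (hμposF e he))
      obtain ⟨e0, he0F, he0⟩ := F.exists_mem_eq_inf' hFne (fun e => v e / μ e)
      set v' : ι → ℝ := fun e => v e - t * μ e with hv'def
      have hv' : ∀ e, 0 ≤ v' e := by
        intro e
        by_cases h : 0 < μ e
        · have hmem : e ∈ F := by simp [hF, h]
          have : t ≤ v e / μ e := Finset.inf'_le _ hmem
          have := (le_div_iff₀ h).mp this
          simp only [hv'def]; linarith
        · have : t * μ e ≤ 0 := mul_nonpos_of_nonneg_of_nonpos ht0 (not_lt.mp h)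
          have := hv e
          simp only [hv'def]; linarith
      have hAv' : A.mulVec v' = A.mulVec v := by
        funext i
        simp only [Matrix.mulVec, dotProduct, hv'def, mul_sub,
          Finset.sum_sub_distrib]
        have : ∑ e, A i e * (t * μ e) = t * ∑ e, A i e * μ e := by
          rw [Finset.mul_sum]; exact Finset.sum_congr rfl fun e _ => by ring
        rw [this, hμsum i, mul_zero, sub_zero]
      have hv'e0 : v' e0 = 0 := by
        have hμe0 : 0 < μ e0 := hμposF e0 he0F
        have htv : t = v e0 / μ e0 := by rw [ht, he0]
        simp only [hv'def, htv]
        rw [div_mul_cancel₀ _ (ne_of_gt hμe0), sub_self]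
      have hsupp : (Finset.univ.filter fun e => v' e ≠ 0)
          ⊆ (Finset.univ.filter fun e => v e ≠ 0).erase e0 := by
        intro e he
        have hv'e : v' e ≠ 0 := by simpa using he
        have hve : v e ≠ 0 := by
          by_contra h
          have : μ e = 0 := by simp [hμ, h]
          apply hv'e
          simp [hv'def, h, this]
        have hene : e ≠ e0 := by
          intro h; exact hv'e (h ▸ hv'e0)
        simp [hene, hve]
      have hcard' : (Finset.univ.filter fun e => v' e ≠ 0).card ≤ N := by
        have h1 := Finset.card_le_card hsupp
        have he0mem : e0 ∈ Finset.univ.filter fun e => v e ≠ 0 := by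
          have := hμv e0 (ne_of_gt (hμposF e0 he0F))
          simp [this]
        have h2 := Finset.card_erase_of_mem he0mem
        omega
      obtain ⟨v'', h1, h2, h3⟩ := ih v' hv' hcard'
      exact ⟨v'', h1, h2.trans hAv', h3⟩

end Cone

section ConeClosed

variable {m ι : Type*} [Fintype m] [Fintype ι]

/-- The image of the nonnegative orthant over a linearly independent set of columns is closed. -/
lemma piece_isClosed (A : Matrix m ι ℝ) (S : Set ι)
    (hS : LinearIndependent ℝ (fun j : S => fun i => A i j.1)) :
    IsClosed {y : m → ℝ | ∃ v : ι → ℝ, (∀ e, 0 ≤ v e) ∧ (∀ e, e ∉ S → v e = 0) ∧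
      A.mulVec v = y} := by
  classical
  haveI : Fintype S := Fintype.ofFinite _
  set L : (S → ℝ) →ₗ[ℝ] (m → ℝ) := (A.submatrix id (Subtype.val : S → ι)).mulVecLin with hL
  have hLapp : ∀ u : S → ℝ, ∀ i, L u i = ∑ j : S, A i j.1 * u j := by
    intro u i
    simp [hL, Matrix.mulVecLin_apply, Matrix.mulVec, dotProduct]
  have hinj : LinearMap.ker L = ⊥ := by
    rw [LinearMap.ker_eq_bot']
    intro u hu
    funext j
    refine Fintype.linearIndependent_iff.mp hS u ?_ j
    funext i
    have := congrFun hu i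
    rw [hLapp u i] at this
    simpa [Finset.sum_apply, mul_comm] using this
  have hemb := LinearMap.isClosedEmbedding_of_injective hinj
  have hset : {y : m → ℝ | ∃ v : ι → ℝ, (∀ e, 0 ≤ v e) ∧ (∀ e, e ∉ S → v e = 0) ∧
      A.mulVec v = y} = L '' {u : S → ℝ | ∀ j, 0 ≤ u j} := by
    ext y
    constructor
    · rintro ⟨v, hv0, hvS, rfl⟩
      refine ⟨fun j => v j.1, fun j => hv0 j.1, ?_⟩
      funext i
      rw [hLapp]
      simp only [Matrix.mulVec, dotProduct]
      rw [Finset.sum_set_coe (f := fun e => A i e * v e)]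
      refine Finset.sum_subset (Finset.subset_univ _) fun e _ he => ?_
      rw [hvS e (by simpa using he), mul_zero]
    · rintro ⟨u, hu, rfl⟩
      refine ⟨fun e => if h : e ∈ S then u ⟨e, h⟩ else 0, ?_, ?_, ?_⟩
      · intro e; by_cases h : e ∈ S
        · simp only [dif_pos h]; exact hu ⟨e, h⟩
        · simp only [dif_neg h]; exact le_rfl
      · intro e he; simp [he]
      · funext i
        rw [hLapp]
        simp only [Matrix.mulVec, dotProduct]
        have h1 : ∑ e : ι, A i e * (if h : e ∈ S then u ⟨e, h⟩ else 0)
            = ∑ e ∈ S.toFinset, A i e * (if h : e ∈ S then u ⟨e, h⟩ else 0) := by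
          refine (Finset.sum_subset (Finset.subset_univ _) fun e _ he => ?_).symm
          rw [dif_neg (by simpa using he), mul_zero]
        rw [h1,
          ← Finset.sum_set_coe (f := fun e => A i e * (if h : e ∈ S then u ⟨e, h⟩ else 0))]
        refine Finset.sum_congr rfl fun j _ => ?_
        rw [dif_pos j.2]
  rw [hset]
  refine hemb.isClosedMap _ ?_
  have : {u : S → ℝ | ∀ j, 0 ≤ u j} = ⋂ j, {u : S → ℝ | 0 ≤ u j} := by
    ext u; simp [Set.mem_iInter]
  rw [this]
  exact isClosed_iInter fun j => isClosed_le continuous_const (continuous_apply j)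

/-- The finitely generated cone `{A v : v ≥ 0}` is closed. -/
lemma coneSet_isClosed (A : Matrix m ι ℝ) :
    IsClosed {y : m → ℝ | ∃ v : ι → ℝ, (∀ e, 0 ≤ v e) ∧ A.mulVec v = y} := by
  classical
  have hset : {y : m → ℝ | ∃ v : ι → ℝ, (∀ e, 0 ≤ v e) ∧ A.mulVec v = y}
      = ⋃ S ∈ {S : Set ι | LinearIndependent ℝ (fun j : S => fun i => A i j.1)},
          {y | ∃ v : ι → ℝ, (∀ e, 0 ≤ v e) ∧ (∀ e, e ∉ S → v e = 0) ∧ A.mulVec v = y} := by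
    ext y
    simp only [Set.mem_iUnion, Set.mem_setOf_eq]
    constructor
    · rintro ⟨v, hv, rfl⟩
      obtain ⟨v', hv'0, hAv', hind⟩ :=
        exists_indep_rep A (Finset.univ.filter fun e => v e ≠ 0).card v hv le_rfl
      exact ⟨{e | v' e ≠ 0}, hind, v', hv'0, fun e he => not_not.mp he, hAv'⟩
    · rintro ⟨S, hS, v, hv, _, rfl⟩
      exact ⟨v, hv, rfl⟩
  rw [hset]
  exact Set.Finite.isClosed_biUnion (Set.toFinite _) fun S hS => piece_isClosed A S hS

end ConeClosed

/-- If a nonnegative linear functional is strictly positive on the feasible polyhedron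
`{x ≥ 0 : A x = A w}`, then it is bounded below by a positive constant there. -/
lemma exists_pos_lowerBound {k ι : Type*} [Fintype k] [Fintype ι]
    (A : Matrix k ι ℝ) (w c : ι → ℝ) (hc : ∀ e, 0 ≤ c e)
    (hpos : ∀ x : ι → ℝ, (∀ e, 0 ≤ x e) → A.mulVec w = A.mulVec x → 0 < c ⬝ᵥ x) :
    ∃ τ : ℝ, 0 < τ ∧ ∀ x : ι → ℝ, (∀ e, 0 ≤ x e) → A.mulVec w = A.mulVec x →
      τ ≤ c ⬝ᵥ x := by
  classical
  haveI instCe : Fintype {e : ι // c e = 0} := Fintype.ofFinite _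
  by_contra hcon
  push_neg at hcon
  have hseq : ∀ N : ℕ, ∃ x : ι → ℝ, (∀ e, 0 ≤ x e) ∧ A.mulVec w = A.mulVec x ∧
      c ⬝ᵥ x < 1 / (N + 1) := by
    intro N
    obtain ⟨x, h1, h2, h3⟩ := hcon (1 / (N + 1)) (by positivity)
    exact ⟨x, h1, h2, h3⟩
  choose x hx0 hxA hxlt using hseq
  set A₀ : Matrix k {e : ι // c e = 0} ℝ := A.submatrix id Subtype.val with hA₀
  have hclosed := coneSet_isClosed A₀
  set y : ℕ → {e : ι // c e = 0} → ℝ := fun N e => x N e.1 with hy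
  -- each coordinate of `x N` supported on `c e ≠ 0` tends to zero
  have hxto : ∀ e : ι, c e ≠ 0 → Filter.Tendsto (fun N => x N e) Filter.atTop (nhds 0) := by
    intro e hce
    have hcpos : 0 < c e := lt_of_le_of_ne (hc e) (Ne.symm hce)
    have hub : ∀ N, x N e ≤ (1 / (N + 1)) / c e := by
      intro N
      have h1 : c e * x N e ≤ c ⬝ᵥ x N := by
        refine Finset.single_le_sum (f := fun e' => c e' * x N e') ?_ (Finset.mem_univ e)
        intro e' _
        exact mul_nonneg (hc e') (hx0 N e')
      have h2 : c e * x N e ≤ 1 / (N + 1) := le_of_lt (lt_of_le_of_lt h1 (hxlt N))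
      rw [le_div_iff₀ hcpos, mul_comm]
      exact h2
    have hlim : Filter.Tendsto (fun N : ℕ => (1 / (N + 1) : ℝ) / c e)
        Filter.atTop (nhds 0) := by
      have := tendsto_one_div_add_atTop_nhds_zero_nat.div_const (c e)
      simpa using this
    exact squeeze_zero (fun N => hx0 N e) hub hlim
  -- A₀ (y N) tends to A w
  have hkey : ∀ N i, A₀.mulVec (y N) i
      = A.mulVec w i - ∑ e ∈ Finset.univ.filter (fun e => ¬ c e = 0), A i e * x N e := by
    intro N i
    have hsplit : A.mulVec (x N) i
        = (∑ e ∈ Finset.univ.filter (fun e => c e = 0), A i e * x N e)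
          + ∑ e ∈ Finset.univ.filter (fun e => ¬ c e = 0), A i e * x N e := by
      simp only [Matrix.mulVec, dotProduct]
      exact (Finset.sum_filter_add_sum_filter_not _ _ _).symm
    have hsub : ∑ e ∈ Finset.univ.filter (fun e => c e = 0), A i e * x N e
        = A₀.mulVec (y N) i := by
      rw [Finset.sum_subtype (p := fun e => c e = 0) (F := instCe) _ (by simp) (fun e => A i e * x N e)]
      simp [hA₀, hy, Matrix.mulVec, dotProduct]
    rw [hxA N, hsplit, ← hsub]
    ring
  have htend : Filter.Tendsto (fun N => A₀.mulVec (y N)) Filter.atTop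
      (nhds (A.mulVec w)) := by
    rw [tendsto_pi_nhds]
    intro i
    have herr : Filter.Tendsto
        (fun N => ∑ e ∈ Finset.univ.filter (fun e => ¬ c e = 0), A i e * x N e)
        Filter.atTop (nhds 0) := by
      have : Filter.Tendsto
          (fun N => ∑ e ∈ Finset.univ.filter (fun e => ¬ c e = 0), A i e * x N e)
          Filter.atTop (nhds (∑ e ∈ Finset.univ.filter (fun e => ¬ c e = 0), (0 : ℝ))) := by
        refine tendsto_finset_sum _ fun e he => ?_
        have hce : ¬ c e = 0 := by simpa using he
        have := (hxto e hce).const_mul (A i e)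
        simpa using this
      simpa using this
    have := (tendsto_const_nhds (x := A.mulVec w i) (f := Filter.atTop)).sub herr
    simp only [sub_zero] at this
    refine this.congr fun N => ?_
    rw [hkey N i]
  have hmem : A.mulVec w ∈ {z : k → ℝ | ∃ v, (∀ e, 0 ≤ v e) ∧ A₀.mulVec v = z} := by
    refine hclosed.mem_of_tendsto htend (Filter.Eventually.of_forall fun N => ?_)
    exact ⟨y N, fun e => hx0 N e.1, rfl⟩
  obtain ⟨v, hv0, hvA⟩ := hmem
  set xs : ι → ℝ := fun e => if h : c e = 0 then v ⟨e, h⟩ else 0 with hxs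
  have hxs0 : ∀ e, 0 ≤ xs e := by
    intro e
    by_cases h : c e = 0
    · simp only [hxs, dif_pos h]; exact hv0 ⟨e, h⟩
    · simp only [hxs, dif_neg h]; exact le_rfl
  have hxsA : A.mulVec w = A.mulVec xs := by
    funext i
    rw [← congrFun hvA i]
    simp only [Matrix.mulVec, dotProduct]
    have h1 : ∑ e : ι, A i e * xs e
        = ∑ e ∈ Finset.univ.filter (fun e => c e = 0), A i e * xs e := by
      refine (Finset.sum_subset (Finset.filter_subset _ _) fun e _ he => ?_).symm
      have : ¬ c e = 0 := by simpa using he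
      simp [hxs, this]
    rw [h1, Finset.sum_subtype (p := fun e => c e = 0) (F := instCe) _ (by simp) (fun e => A i e * xs e)]
    refine (Finset.sum_congr rfl fun j _ => ?_).symm
    simp [hA₀, hxs, j.2]
  have hdot : c ⬝ᵥ xs = 0 := by
    simp only [dotProduct]
    refine Finset.sum_eq_zero fun e _ => ?_
    by_cases h : c e = 0
    · simp [h]
    · simp [hxs, h]
  have := hpos xs hxs0 hxsA
  rw [hdot] at this
  exact lt_irrefl 0 this

section Glue

lemma cutWeight_eq_dot (n : ℕ) (w : EdgeSlot n → ℝ) (S : Finset (Fin n)) :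
    (fun e : EdgeSlot n => if (e.1 ∩ S).card = 1 then (1 : ℝ) else 0) ⬝ᵥ w
      = cutWeight n w S := by
  simp [dotProduct, cutWeight, ite_mul]

lemma cutVal_set_finite (n : ℕ) (w : EdgeSlot n → ℝ) :
    {x : ℝ | ∃ S : Finset (Fin n), S.Nonempty ∧ S ≠ Finset.univ ∧
      cutWeight n w S = x}.Finite := by
  have hsub : {x : ℝ | ∃ S : Finset (Fin n), S.Nonempty ∧ S ≠ Finset.univ ∧
      cutWeight n w S = x} ⊆ (fun S => cutWeight n w S) '' Set.univ := by
    rintro x ⟨S, _, _, h⟩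
    exact ⟨S, trivial, h⟩
  exact (Set.finite_univ.image _).subset hsub

lemma minCutVal_le (n : ℕ) (w : EdgeSlot n → ℝ) (S : Finset (Fin n))
    (h1 : S.Nonempty) (h2 : S ≠ Finset.univ) :
    minCutVal n w ≤ cutWeight n w S :=
  csInf_le (cutVal_set_finite n w).bddBelow ⟨S, h1, h2, rfl⟩

lemma minCutVal_mem (n : ℕ) (w : EdgeSlot n → ℝ)
    (hsh : ∃ S : Finset (Fin n), S.Nonempty ∧ S ≠ Finset.univ) :
    ∃ S : Finset (Fin n), S.Nonempty ∧ S ≠ Finset.univ ∧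
      cutWeight n w S = minCutVal n w := by
  obtain ⟨S, h1, h2⟩ := hsh
  have hne : {x : ℝ | ∃ S : Finset (Fin n), S.Nonempty ∧ S ≠ Finset.univ ∧
      cutWeight n w S = x}.Nonempty := ⟨cutWeight n w S, S, h1, h2, rfl⟩
  exact Set.Nonempty.csInf_mem hne (cutVal_set_finite n w)

lemma exists_id_matrix (n : ℕ) :
    ∃ A : Matrix (Fin (Fintype.card (EdgeSlot n))) (EdgeSlot n) ℝ,
      ∀ v v' : EdgeSlot n → ℝ, A.mulVec v = A.mulVec v' → v = v' := by
  classical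
  set eqv := Fintype.equivFin (EdgeSlot n) with heqv
  set A : Matrix (Fin (Fintype.card (EdgeSlot n))) (EdgeSlot n) ℝ :=
    fun i e => if eqv e = i then 1 else 0 with hA
  have happ : ∀ (v : EdgeSlot n → ℝ) i, A.mulVec v i = v (eqv.symm i) := by
    intro v i
    simp only [hA, Matrix.mulVec, dotProduct, ite_mul, one_mul, zero_mul]
    rw [Fintype.sum_equiv eqv _ (fun i' => if i' = i then v (eqv.symm i') else 0)
      (fun e => by simp)]
    rw [Finset.sum_ite_eq' Finset.univ i (fun i' => v (eqv.symm i'))]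
    simp
  refine ⟨A, fun v v' h => ?_⟩
  funext e
  have := congrFun h (eqv e)
  rw [happ, happ] at this
  simpa using this

end Glue

/-- For a connected graph `G` (`λ(G) > 0`), `con-cert(G)` equals the infimum over
`0 < τ ≤ λ(G)` of `at-least-τ-cert(G)`, and this infimum is attained. -/
theorem conCert_eq_inf_atLeastCert (n : ℕ) (w : EdgeSlot n → ℝ) (hw : ∀ e, 0 ≤ w e)
    (hconn : 0 < minCutVal n w) :
    conCert n w =
        sInf {k : ℕ | ∃ τ : ℝ, 0 < τ ∧ τ ≤ minCutVal n w ∧ atLeastCert n τ w = k} ∧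
      ∃ τ : ℝ, 0 < τ ∧ τ ≤ minCutVal n w ∧ conCert n w = atLeastCert n τ w := by
  classical
  -- shores exist
  have hsh : ∃ S : Finset (Fin n), S.Nonempty ∧ S ≠ Finset.univ := by
    by_contra h
    push_neg at h
    have hempty : {x : ℝ | ∃ S : Finset (Fin n), S.Nonempty ∧ S ≠ Finset.univ ∧
        cutWeight n w S = x} = ∅ := by
      ext x
      simp only [Set.mem_setOf_eq, Set.mem_empty_iff_false, iff_false]
      rintro ⟨S, h1, h2, _⟩
      exact h2 (h S h1)
    rw [minCutVal, hempty, Real.sInf_empty] at hconn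
    exact lt_irrefl 0 hconn
  obtain ⟨AId, hAId⟩ := exists_id_matrix n
  set C : Set ℕ := {k : ℕ | ∃ A : Matrix (Fin k) (EdgeSlot n) ℝ,
    ∀ w' : EdgeSlot n → ℝ, (∀ e, 0 ≤ w' e) → A.mulVec w = A.mulVec w' →
      (0 < minCutVal n w' ↔ 0 < minCutVal n w)} with hCdef
  set Sset : ℝ → Set ℕ := fun τ => {k : ℕ | ∃ A : Matrix (Fin k) (EdgeSlot n) ℝ,
    ∀ w' : EdgeSlot n → ℝ, (∀ e, 0 ≤ w' e) → A.mulVec w = A.mulVec w' →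
      τ ≤ minCutVal n w'} with hSdef
  have hcon_def : conCert n w = sInf C := rfl
  have hat_def : ∀ τ : ℝ, atLeastCert n τ w = sInf (Sset τ) := fun τ => rfl
  have hCne : C.Nonempty :=
    ⟨_, AId, fun w' _ h => by rw [← hAId w w' h]⟩
  have hSne : ∀ τ : ℝ, τ ≤ minCutVal n w → (Sset τ).Nonempty := by
    intro τ hτ
    exact ⟨_, AId, fun w' _ h => by rw [← hAId w w' h]; exact hτ⟩
  have hsub : ∀ τ : ℝ, 0 < τ → Sset τ ⊆ C := by
    rintro τ hτ k ⟨A, hA⟩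
    exact ⟨A, fun w' h1 h2 => iff_of_true (lt_of_lt_of_le hτ (hA w' h1 h2)) hconn⟩
  -- the optimal connectivity certificate
  obtain ⟨A, hA⟩ := Nat.sInf_mem hCne
  set Dfin : Finset (Finset (Fin n)) :=
    Finset.univ.filter (fun S => S.Nonempty ∧ S ≠ Finset.univ) with hDdef
  have hDmem : ∀ S : Finset (Fin n), S ∈ Dfin ↔ S.Nonempty ∧ S ≠ Finset.univ := by
    intro S; simp [hDdef]
  have hDne : Dfin.Nonempty := by
    obtain ⟨S, h1, h2⟩ := hsh
    exact ⟨S, (hDmem S).mpr ⟨h1, h2⟩⟩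
  have key : ∀ S ∈ Dfin, ∃ τ : ℝ, 0 < τ ∧ ∀ x : EdgeSlot n → ℝ, (∀ e, 0 ≤ x e) →
      A.mulVec w = A.mulVec x → τ ≤ cutWeight n x S := by
    intro S hS
    obtain ⟨h1, h2⟩ := (hDmem S).mp hS
    obtain ⟨τ, hτ, hbd⟩ := exists_pos_lowerBound A w
      (fun e => if (e.1 ∩ S).card = 1 then (1 : ℝ) else 0)
      (fun e => by by_cases h : (e.1 ∩ S).card = 1 <;> simp [h])
      (fun x hx hAx => by
        rw [cutWeight_eq_dot]
        exact lt_of_lt_of_le ((hA x hx hAx).mpr hconn) (minCutVal_le n x S h1 h2))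
    exact ⟨τ, hτ, fun x hx hAx => by
      rw [← cutWeight_eq_dot]; exact hbd x hx hAx⟩
  set τf : Finset (Fin n) → ℝ := fun S => if h : S ∈ Dfin then (key S h).choose else 1
    with hτf
  have hτfpos : ∀ S ∈ Dfin, 0 < τf S := by
    intro S hS
    simp only [hτf, dif_pos hS]
    exact (key S hS).choose_spec.1
  have hτfbd : ∀ S ∈ Dfin, ∀ x : EdgeSlot n → ℝ, (∀ e, 0 ≤ x e) →
      A.mulVec w = A.mulVec x → τf S ≤ cutWeight n x S := by
    intro S hS
    simp only [hτf, dif_pos hS]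
    exact (key S hS).choose_spec.2
  set τ : ℝ := min (minCutVal n w) (Dfin.inf' hDne τf) with hτdef
  have hτpos : 0 < τ :=
    lt_min hconn ((Finset.lt_inf'_iff (H := hDne)).mpr fun S hS => hτfpos S hS)
  have hτle : τ ≤ minCutVal n w := min_le_left _ _
  have hcert : sInf C ∈ Sset τ := by
    refine ⟨A, fun x hx hAx => ?_⟩
    obtain ⟨S0, h1, h2, heq⟩ := minCutVal_mem n x hsh
    have hS0 : S0 ∈ Dfin := (hDmem S0).mpr ⟨h1, h2⟩
    calc τ ≤ Dfin.inf' hDne τf := min_le_right _ _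
      _ ≤ τf S0 := Finset.inf'_le _ hS0
      _ ≤ cutWeight n x S0 := hτfbd S0 hS0 x hx hAx
      _ = minCutVal n x := heq
  have h1 : atLeastCert n τ w ≤ conCert n w := by
    rw [hcon_def, hat_def]
    exact Nat.sInf_le hcert
  have h2 : conCert n w ≤ atLeastCert n τ w := by
    rw [hcon_def, hat_def]
    exact Nat.sInf_le (hsub τ hτpos (Nat.sInf_mem ⟨_, hcert⟩))
  have heqτ : conCert n w = atLeastCert n τ w := le_antisymm h2 h1
  refine ⟨le_antisymm ?_ ?_, τ, hτpos, hτle, heqτ⟩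
  · refine le_csInf ⟨atLeastCert n τ w, τ, hτpos, hτle, rfl⟩ ?_
    rintro k ⟨τ', hτ'pos, hτ'le, rfl⟩
    rw [hcon_def, hat_def]
    exact Nat.sInf_le (hsub τ' hτ'pos (Nat.sInf_mem (hSne τ' hτ'le)))
  · exact Nat.sInf_le ⟨τ, hτpos, hτle, heqτ.symm⟩
end

section
/- Let n ≥ 4 be even, let w ∈ ℝ^(n choose 2) be the weight vector of the n-vertex cycle C_n with unit weights (w({i,i+1}) = 1 for i = 1,…,n−1, w({n,1}) = 1, and w(e) = 0 otherwise), and let M_n be the universal cut-edge incidence matrix. If X is a real (2^{n−1}−1)×(n choose 2) matrix with X ≤ M_n entrywise and (Xw)_S > 0 for every row index S, then rank(X) ≥ n/4. -/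
open Finset Matrix

section CycleAux

variable {n : ℕ} [NeZero n]

lemma auxValAddOne (hn : 2 ≤ n) (i : Fin n) :
    ((i + 1 : Fin n) : ℕ) = ((i : ℕ) + 1) % n := by
  rw [Fin.add_def]
  simp only [Fin.val_one']
  rw [Nat.mod_eq_of_lt (show 1 < n by omega)]

lemma auxNeAddOne (hn : 2 ≤ n) (i : Fin n) : i ≠ i + 1 := by
  intro h
  have h2 := auxValAddOne hn i
  rw [← h] at h2
  have hi := i.isLt
  rcases Nat.lt_or_ge ((i : ℕ) + 1) n with hlt | hge
  · rw [Nat.mod_eq_of_lt hlt] at h2; omega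
  · have hh : (i : ℕ) + 1 = n := by omega
    rw [hh, Nat.mod_self] at h2; omega

lemma auxNeAddTwo (hn : 3 ≤ n) (i : Fin n) : i ≠ i + 1 + 1 := by
  intro h
  have h2 := auxValAddOne (by omega) (i + 1)
  have h3 := auxValAddOne (show 2 ≤ n by omega) i
  rw [← h] at h2
  rw [h3] at h2
  have hi := i.isLt
  rcases Nat.lt_or_ge ((i : ℕ) + 1) n with hlt | hge
  · rw [Nat.mod_eq_of_lt hlt] at h2
    rcases Nat.lt_or_ge ((i : ℕ) + 1 + 1) n with hlt2 | hge2
    · rw [Nat.mod_eq_of_lt hlt2] at h2; omega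
    · have hh : (i : ℕ) + 1 + 1 = n := by omega
      rw [hh, Nat.mod_self] at h2; omega
  · have hh : (i : ℕ) + 1 = n := by omega
    rw [hh, Nat.mod_self] at h2
    rw [Nat.mod_eq_of_lt (show 0 + 1 < n by omega)] at h2
    omega

/-- The `i`-th edge of the cycle. -/
def cycE (hn : 2 ≤ n) (i : Fin n) : EdgeSlot n :=
  ⟨{i, i + 1}, Finset.card_pair (auxNeAddOne hn i)⟩

lemma cycE_injective (hn : 2 ≤ n) (hn3 : 3 ≤ n) : Function.Injective (cycE (n := n) hn) := by
  intro i j h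
  have h' : ({i, i + 1} : Finset (Fin n)) = ({j, j + 1} : Finset (Fin n)) :=
    Subtype.ext_iff.mp h
  have hi : i = j ∨ i = j + 1 := by
    have hmem : i ∈ ({j, j + 1} : Finset (Fin n)) := by rw [← h']; simp
    simpa using hmem
  have hj : j = i ∨ j = i + 1 := by
    have hmem : j ∈ ({i, i + 1} : Finset (Fin n)) := by rw [h']; simp
    simpa using hmem
  rcases hi with h1 | h1
  · exact h1
  · rcases hj with h2 | h2
    · exact h2.symm
    · exfalso
      rw [h1] at h2
      exact auxNeAddTwo hn3 j h2

/-- Row of `X` against the cycle weight equals the sum over cycle edges. -/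
lemma mulVec_cycleWeight (hn : 2 ≤ n) (hn3 : 3 ≤ n)
    (X : Matrix (Shore n) (EdgeSlot n) ℝ) (S : Shore n) :
    X.mulVec (cycleWeight n) S = ∑ i : Fin n, X S (cycE hn i) := by
  classical
  rw [Matrix.mulVec, dotProduct]
  calc ∑ e : EdgeSlot n, X S e * cycleWeight n e
      = ∑ e ∈ Finset.univ.filter
          (fun e : EdgeSlot n => ∃ i : Fin n, e.1 = {i, i + 1}), X S e := by
        rw [Finset.sum_filter]
        refine Finset.sum_congr rfl fun e _ => ?_
        rw [cycleWeight]
        by_cases h : ∃ i : Fin n, e.1 = {i, i + 1} <;> simp [h]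
    _ = ∑ i : Fin n, X S (cycE hn i) := by
        have himg : Finset.univ.filter
            (fun e : EdgeSlot n => ∃ i : Fin n, e.1 = {i, i + 1})
            = Finset.univ.image (cycE hn) := by
          ext e
          simp only [Finset.mem_filter, Finset.mem_image, Finset.mem_univ, true_and]
          constructor
          · rintro ⟨i, hi⟩
            exact ⟨i, Subtype.ext hi.symm⟩
          · rintro ⟨i, rfl⟩
            exact ⟨i, rfl⟩
        rw [himg, Finset.sum_image (fun x _ y _ h => cycE_injective hn hn3 h)]

lemma pair_inter_singleton_card_ne_one {α : Type*} [DecidableEq α] {a b v : α}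
    (h1 : v ≠ a) (h2 : v ≠ b) : (({a, b} : Finset α) ∩ {v}).card ≠ 1 := by
  have h : ({a, b} : Finset α) ∩ {v} = ∅ := by
    ext x
    simp only [Finset.mem_inter, Finset.mem_insert, Finset.mem_singleton,
      Finset.notMem_empty, iff_false, not_and]
    rintro (rfl | rfl) rfl
    · exact h1 rfl
    · exact h2 rfl
  rw [h]
  simp

lemma sum_range_pair (m : ℕ) (g : ℕ → ℝ) :
    ∑ i ∈ Finset.range (2 * m), g i = ∑ k ∈ Finset.range m, (g (2 * k) + g (2 * k + 1)) := by
  induction m with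
  | zero => simp
  | succ m ih =>
    rw [show 2 * (m + 1) = (2 * m + 1) + 1 by ring, Finset.sum_range_succ,
      Finset.sum_range_succ, Finset.sum_range_succ, ih]
    ring

end CycleAux

/-- For `n ≥ 4` even and `w` the weight vector of the unit-weight `n`-cycle: any real
matrix `X ≤ M_n` (entrywise) with all entries of `Xw` positive has rank at least `n/4`. -/
theorem cycle_cutRank_lower_bound (n : ℕ) [NeZero n] (hn4 : 4 ≤ n) (hne : Even n)
    (X : Matrix (Shore n) (EdgeSlot n) ℝ)
    (hX : ∀ S e, X S e ≤ Mn n S e)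
    (hpos : ∀ S, 0 < X.mulVec (cycleWeight n) S) :
    (n : ℝ) / 4 ≤ (X.rank : ℝ) := by
  classical
  have hn2 : 2 ≤ n := by omega
  have hn3 : 3 ≤ n := by omega
  obtain ⟨m0, hm0⟩ := hne
  have hm' : n = 2 * m0 := by omega
  have hm2 : 2 ≤ m0 := by omega
  set m := m0 with hmdef
  -- vertices 2j+1 and corresponding singleton shores
  have hvlt : ∀ j : Fin m, 2 * (j : ℕ) + 1 < n := fun j => by have := j.isLt; omega
  set V : Fin m → Fin n := fun j => ⟨2 * (j : ℕ) + 1, hvlt j⟩ with hVdef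
  have hSh : ∀ j : Fin m, ({V j} : Finset (Fin n)).Nonempty ∧ (0 : Fin n) ∉ ({V j} : Finset (Fin n)) := by
    intro j
    refine ⟨Finset.singleton_nonempty _, ?_⟩
    simp only [Finset.mem_singleton]
    intro h0
    have := congrArg Fin.val h0
    simp only [hVdef, Fin.val_zero] at this
    omega
  set Sh : Fin m → Shore n := fun j => ⟨{V j}, hSh j⟩ with hShdef
  have h2k : ∀ k : Fin m, 2 * (k : ℕ) < n := fun k => by have := k.isLt; omega
  have h2k1 : ∀ k : Fin m, 2 * (k : ℕ) + 1 < n := fun k => by have := k.isLt; omega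
  set Z : Matrix (Fin m) (Fin m) ℝ := fun j k =>
    X (Sh j) (cycE hn2 ⟨2 * (k : ℕ), h2k k⟩) + X (Sh j) (cycE hn2 ⟨2 * (k : ℕ) + 1, h2k1 k⟩)
    with hZdef
  -- entries at non-cut edges are nonpositive
  have hX0 : ∀ (S : Shore n) (e : EdgeSlot n), (e.1 ∩ S.1).card ≠ 1 → X S e ≤ 0 := by
    intro S e h
    have hh := hX S e
    rwa [Mn, if_neg h] at hh
  -- off-diagonal entries of Z are nonpositive
  have hoff : ∀ j k : Fin m, j ≠ k → Z j k ≤ 0 := by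
    intro j k hjk
    have hjkv : (j : ℕ) ≠ (k : ℕ) := fun h => hjk (Fin.ext h)
    have key : ∀ (i : ℕ) (hi : i < n), (i = 2 * (k : ℕ) ∨ i = 2 * (k : ℕ) + 1) →
        X (Sh j) (cycE hn2 ⟨i, hi⟩) ≤ 0 := by
      intro i hi hik
      apply hX0
      apply pair_inter_singleton_card_ne_one
      · intro hva
        have hv := congrArg Fin.val hva
        simp only [hVdef] at hv
        omega
      · intro hvb
        have hv := congrArg Fin.val hvb
        rw [auxValAddOne hn2] at hv
        simp only [hVdef] at hv
        rcases Nat.lt_or_ge (i + 1) n with hlt | hge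
        · rw [Nat.mod_eq_of_lt hlt] at hv; omega
        · have hh : i + 1 = n := by omega
          rw [hh, Nat.mod_self] at hv; omega
    have h1 := key _ (h2k k) (Or.inl rfl)
    have h2 := key _ (h2k1 k) (Or.inr rfl)
    exact add_nonpos h1 h2
  -- row sums of Z are positive
  have hrow : ∀ j : Fin m, 0 < ∑ k, Z j k := by
    intro j
    have hp := hpos (Sh j)
    rw [mulVec_cycleWeight hn2 hn3] at hp
    have hsum : ∑ i : Fin n, X (Sh j) (cycE hn2 i) = ∑ k, Z j k := by
      set g : ℕ → ℝ := fun i => if h : i < n then X (Sh j) (cycE hn2 ⟨i, h⟩) else 0 with hg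
      have h1 : ∑ i : Fin n, X (Sh j) (cycE hn2 i) = ∑ i ∈ Finset.range n, g i := by
        rw [← Fin.sum_univ_eq_sum_range g n]
        refine Finset.sum_congr rfl fun i _ => ?_
        rw [hg]
        simp only [dif_pos i.isLt, Fin.eta]
      rw [h1, hm', sum_range_pair,
        ← Fin.sum_univ_eq_sum_range (fun k => g (2 * k) + g (2 * k + 1)) m]
      refine Finset.sum_congr rfl fun k _ => ?_
      rw [hg, hZdef]
      simp only [dif_pos (h2k k), dif_pos (h2k1 k)]
    rw [hsum] at hp
    exact hp
  -- Z has nonzero determinant (strict diagonal dominance)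
  have hdet : Z.det ≠ 0 := by
    apply det_ne_zero_of_sum_row_lt_diag
    intro k
    have hrk := hrow k
    have he : ∑ j ∈ Finset.univ.erase k, ‖Z k j‖ = ∑ j ∈ Finset.univ.erase k, (-(Z k j)) := by
      refine Finset.sum_congr rfl fun j hj => ?_
      have hjk : j ≠ k := (Finset.mem_erase.mp hj).1
      rw [Real.norm_eq_abs, abs_of_nonpos (hoff k j (fun h => hjk h.symm))]
    have hes : ∑ j ∈ Finset.univ.erase k, Z k j = (∑ j, Z k j) - Z k k :=
      Finset.sum_erase_eq_sub (Finset.mem_univ k)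
    have hsumneg : ∑ j ∈ Finset.univ.erase k, (-(Z k j)) = -((∑ j, Z k j) - Z k k) := by
      rw [← hes, Finset.sum_neg_distrib]
    have hkk : Z k k ≤ ‖Z k k‖ := Real.le_norm_self _
    rw [he, hsumneg]
    linarith
  -- rank of Z is m
  have hZrank : Z.rank = m := by
    rw [Matrix.rank_of_isUnit Z ((Matrix.isUnit_iff_isUnit_det Z).mpr (isUnit_iff_ne_zero.mpr hdet))]
    simp
  -- Z = Q * X * P, hence rank Z ≤ rank X
  set Q : Matrix (Fin m) (Shore n) ℝ := fun j S => if S = Sh j then 1 else 0 with hQdef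
  set P : Matrix (EdgeSlot n) (Fin m) ℝ := fun e k =>
    (if e = cycE hn2 ⟨2 * (k : ℕ), h2k k⟩ then 1 else 0) +
    (if e = cycE hn2 ⟨2 * (k : ℕ) + 1, h2k1 k⟩ then 1 else 0) with hPdef
  have hZeq : Z = Q * X * P := by
    ext j k
    have hQX : (Q * X) j = fun e => X (Sh j) e := by
      funext e
      rw [Matrix.mul_apply]
      simp [hQdef, ite_mul, Finset.sum_ite_eq']
    rw [Matrix.mul_apply]
    simp only [hQX, hPdef, hZdef, mul_add, mul_ite, mul_one, mul_zero,
      Finset.sum_add_distrib, Finset.sum_ite_eq', Finset.mem_univ, if_true]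
  have hrankle : m ≤ X.rank := by
    calc m = Z.rank := hZrank.symm
      _ = ((Q * X) * P).rank := by rw [hZeq]
      _ ≤ (Q * X).rank := Matrix.rank_mul_le_left _ _
      _ ≤ X.rank := Matrix.rank_mul_le_right _ _
  -- conclude
  have hc : (m : ℝ) ≤ (X.rank : ℝ) := by exact_mod_cast hrankle
  have hnn : (n : ℝ) = 2 * (m : ℝ) := by exact_mod_cast hm'
  linarith
end

section
/- Let m ≥ 1 and let Y ∈ ℝ^{m×m} be a matrix with Y(i,i) = 1 for every i and Σ_{j≠i} |Y(i,j)| ≤ 1 for every i. Then rank(Y) ≥ m/2. -/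
/-!
Write `r = rank Y`. If `P` is the orthogonal projection onto the column space of `Y`, then
`P Y = Y` and `tr (P Pᵀ) = tr P = r`, so Cauchy–Schwarz for the Frobenius inner product gives
`(tr Y)² = (tr (Y Pᵀ))² ≤ r · ‖Y‖_F²`. The hypotheses make `tr Y = m` and bound every row of `Y`
by `1 + 1² = 2` in squared `ℓ²` norm, so `m² ≤ 2 r m`.
-/

open Finset Matrix

namespace Matrix

variable {m n : Type*} [Fintype m] [Fintype n]

theorem exists_hermitian_projection_mul_eq_self {𝕜 : Type*} [RCLike 𝕜] [DecidableEq m]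
    [DecidableEq n] (A : Matrix m n 𝕜) :
    ∃ P : Matrix m m 𝕜, P.IsHermitian ∧ P * P = P ∧ P * A = A ∧ P.trace = A.rank := by
  let b := PiLp.basisFun 2 𝕜 m
  let b' := PiLp.basisFun 2 𝕜 n
  let V := LinearMap.range (toLin b' b A)
  let p : EuclideanSpace 𝕜 m →ₗ[𝕜] EuclideanSpace 𝕜 m := V.starProjection
  have hp : LinearMap.IsProj V p :=
    ⟨V.starProjection_apply_mem, fun _ hx => V.starProjection_eq_self_iff.mpr hx⟩
  refine ⟨LinearMap.toMatrix b b p, ?_, ?_, ?_, ?_⟩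
  · rw [← isSymmetric_toEuclideanLin_iff]
    change (toLin b b _).IsSymmetric
    rw [toLin_toMatrix]
    exact V.starProjection_isSymmetric
  · rw [← LinearMap.toMatrix_mul,
      (ContinuousLinearMap.IsIdempotentElem.toLinearMap V.isIdempotentElem_starProjection).eq]
  · have hpA : p ∘ₗ toLin b' b A = toLin b' b A :=
      LinearMap.ext fun x => hp.map_id _ ⟨x, rfl⟩
    rw [← LinearMap.toMatrix_toLin b' b A, ← LinearMap.toMatrix_comp, hpA]
  · rw [← LinearMap.trace_eq_matrix_trace, hp.trace, rank_eq_finrank_range_toLin A b b']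

theorem trace_mul_transpose (A B : Matrix m n ℝ) :
    (A * Bᵀ).trace = ∑ i, ∑ j, A i j * B i j := by
  simp only [trace, diag, mul_apply, transpose_apply]

theorem trace_mul_transpose_self (A : Matrix m n ℝ) :
    (A * Aᵀ).trace = ∑ i, ∑ j, A i j ^ 2 := by
  simp only [trace_mul_transpose, sq]

theorem trace_mul_transpose_sq_le (A B : Matrix m n ℝ) :
    (A * Bᵀ).trace ^ 2 ≤ (A * Aᵀ).trace * (B * Bᵀ).trace := by
  simp only [trace_mul_transpose_self, trace_mul_transpose, ← Fintype.sum_prod_type']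
  exact sum_mul_sq_le_sq_mul_sq _ _ _

theorem trace_sq_le_rank_mul_trace_mul_transpose [DecidableEq n] (A : Matrix n n ℝ) :
    A.trace ^ 2 ≤ A.rank * (A * Aᵀ).trace := by
  obtain ⟨P, hPh, hPP, hPA, hPtr⟩ := A.exists_hermitian_projection_mul_eq_self
  have hPt : Pᵀ = P := by rw [← conjTranspose_eq_transpose_of_trivial, hPh.eq]
  calc A.trace ^ 2 = (A * Pᵀ).trace ^ 2 := by rw [hPt, trace_mul_comm, hPA]
    _ ≤ (A * Aᵀ).trace * (P * Pᵀ).trace := trace_mul_transpose_sq_le A P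
    _ = A.rank * (A * Aᵀ).trace := by rw [hPt, hPP, hPtr, mul_comm]

end Matrix

theorem sum_sq_le_sq_add_one_of_sum_abs_erase_le_one {ι : Type*} [Fintype ι] [DecidableEq ι]
    (x : ι → ℝ) (i : ι) (h : ∑ j ∈ univ.erase i, |x j| ≤ 1) :
    ∑ j, x j ^ 2 ≤ x i ^ 2 + 1 := by
  have hoff : ∑ j ∈ univ.erase i, x j ^ 2 ≤ (∑ j ∈ univ.erase i, |x j|) ^ 2 := by
    simpa only [sq_abs] using sum_sq_le_sq_sum_of_nonneg fun j _ => abs_nonneg (x j)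
  have hnonneg : 0 ≤ ∑ j ∈ univ.erase i, |x j| := sum_nonneg fun j _ => abs_nonneg (x j)
  rw [← add_sum_erase _ _ (mem_univ i)]
  nlinarith

theorem rank_ge_of_unit_diag_dominant_general (m : ℕ)
    (Y : Matrix (Fin m) (Fin m) ℝ)
    (hdiag : ∀ i, Y i i = 1)
    (hoff : ∀ i, ∑ j ∈ Finset.univ.erase i, |Y i j| ≤ 1) :
    (m : ℝ) / 2 ≤ (Y.rank : ℝ) := by
  have htrace : Y.trace = m := by simp [trace, hdiag]
  have hfrob : (Y * Yᵀ).trace ≤ 2 * m := by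
    rw [trace_mul_transpose_self]
    calc ∑ i, ∑ j, Y i j ^ 2 ≤ ∑ _i : Fin m, (2 : ℝ) := sum_le_sum fun i _ => by
          simpa [hdiag i, one_add_one_eq_two] using
            sum_sq_le_sq_add_one_of_sum_abs_erase_le_one (Y i) i (hoff i)
      _ = 2 * m := by simp [mul_comm]
  have hCS := Y.trace_sq_le_rank_mul_trace_mul_transpose
  rw [htrace] at hCS
  have hr : (0 : ℝ) ≤ Y.rank := Nat.cast_nonneg _
  nlinarith [mul_le_mul_of_nonneg_left hfrob hr]

/-- A real `m × m` matrix with unit diagonal whose off-diagonal entries have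
row-wise `ℓ₁` norm at most `1` has rank at least `m/2`. -/
theorem rank_ge_of_unit_diag_dominant (m : ℕ) (hm : 1 ≤ m)
    (Y : Matrix (Fin m) (Fin m) ℝ)
    (hdiag : ∀ i, Y i i = 1)
    (hoff : ∀ i, ∑ j ∈ Finset.univ.erase i, |Y i j| ≤ 1) :
    (m : ℝ) / 2 ≤ (Y.rank : ℝ) :=
  rank_ge_of_unit_diag_dominant_general m Y hdiag hoff
end

section
/- Let ℓ, k ≥ 1 be integers, let t > 0 be real, let 0 < δ < 1 with ln(k/δ) ≥ 2, and let x^(1), …, x^(k) ∈ {0,1}^ℓ satisfy t/8 ≤ |x^(i)| ≤ 2t for all i, where |x| denotes the number of ones of x. Let r = ⌈8ℓ ln(k/δ)/t⌉ and sample f(1), …, f(r) independently and uniformly from {1,…,ℓ}. Then the probability that there exists i ∈ {1,…,k} such that the number of indices s ∈ {1,…,r} with x^(i)_{f(s)} = 1 exceeds 64 ln(k/δ) is at most δ. -/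
open Finset

private lemma pow_div_exp_le_factorial (m : ℕ) :
    ((m : ℝ) / Real.exp 1) ^ m ≤ (m.factorial : ℝ) := by
  induction m with
  | zero => simp
  | succ n ih =>
    have he : (0:ℝ) < Real.exp 1 := Real.exp_pos 1
    have key : ((n:ℝ) + 1) ^ n ≤ Real.exp 1 * (n:ℝ) ^ n := by
      rcases Nat.eq_zero_or_pos n with h | h
      · subst h; simpa using Real.one_le_exp (le_refl (0:ℝ))
      · have hn : (0:ℝ) < n := by exact_mod_cast h
        have h1 : (n:ℝ) + 1 ≤ (n:ℝ) * Real.exp (1 / n) := by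
          have h2 := Real.add_one_le_exp (1 / (n:ℝ))
          have h3 : (n:ℝ) * (1/(n:ℝ) + 1) ≤ (n:ℝ) * Real.exp (1/(n:ℝ)) :=
            mul_le_mul_of_nonneg_left h2 hn.le
          calc (n:ℝ) + 1 = (n:ℝ) * (1/(n:ℝ) + 1) := by field_simp; ring
            _ ≤ _ := h3
        calc ((n:ℝ)+1)^n ≤ ((n:ℝ) * Real.exp (1/n))^n :=
              pow_le_pow_left₀ (by positivity) h1 n
          _ = (n:ℝ)^n * Real.exp (1/n) ^ n := mul_pow _ _ _
          _ = (n:ℝ)^n * Real.exp (n * (1/n)) := by rw [Real.exp_nat_mul]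
          _ = (n:ℝ)^n * Real.exp 1 := by rw [mul_one_div, div_self hn.ne']
          _ = Real.exp 1 * (n:ℝ)^n := mul_comm _ _
    have step : (((n:ℝ)+1)/Real.exp 1)^(n+1) ≤ ((n:ℝ)+1) * (((n:ℝ))/Real.exp 1)^n := by
      rw [div_pow, div_pow, ← mul_div_assoc, div_le_div_iff₀ (by positivity) (by positivity)]
      have hnn : (0:ℝ) ≤ ((n:ℝ)+1) := by positivity
      have hen : (0:ℝ) < Real.exp 1 ^ n := by positivity
      calc ((n:ℝ)+1)^(n+1) * Real.exp 1 ^ n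
          = (((n:ℝ)+1)^n * Real.exp 1 ^ n) * ((n:ℝ)+1) := by ring
        _ ≤ ((Real.exp 1 * (n:ℝ)^n) * Real.exp 1 ^ n) * ((n:ℝ)+1) := by
            apply mul_le_mul_of_nonneg_right (mul_le_mul_of_nonneg_right key hen.le) hnn
        _ = (n:ℝ)^n * Real.exp 1 ^ (n+1) * ((n:ℝ)+1) := by ring
        _ = ((n:ℝ)+1) * (n:ℝ)^n * Real.exp 1 ^ (n+1) := by ring
    calc (((n+1:ℕ):ℝ)/Real.exp 1)^(n+1) = (((n:ℝ)+1)/Real.exp 1)^(n+1) := by push_cast; ring_nf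
      _ ≤ ((n:ℝ)+1) * (((n:ℝ))/Real.exp 1)^n := step
      _ ≤ ((n:ℝ)+1) * n.factorial := by
          apply mul_le_mul_of_nonneg_left ih (by positivity)
      _ = ((n+1).factorial : ℝ) := by push_cast [Nat.factorial_succ]; ring

private lemma count_many_hits (ℓ r m : ℕ) (S : Finset (Fin ℓ)) :
    ((univ.filter fun f : Fin r → Fin ℓ => m ≤ (univ.filter fun s => f s ∈ S).card).card)
      ≤ r.choose m * S.card ^ m * ℓ ^ (r - m) := by
  classical
  have hsub : (univ.filter fun f : Fin r → Fin ℓ => m ≤ (univ.filter fun s => f s ∈ S).card)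
      ⊆ (Finset.powersetCard m (univ : Finset (Fin r))).biUnion
          (fun T => Fintype.piFinset fun s => if s ∈ T then S else univ) := by
    intro f hf
    simp only [mem_filter, mem_univ, true_and] at hf
    obtain ⟨T, hTsub, hTcard⟩ := Finset.exists_subset_card_eq hf
    refine Finset.mem_biUnion.mpr ⟨T, Finset.mem_powersetCard.mpr ⟨subset_univ T, hTcard⟩, ?_⟩
    rw [Fintype.mem_piFinset]
    intro s
    by_cases hs : s ∈ T
    · simpa [hs] using (mem_filter.mp (hTsub hs)).2
    · simp [hs]
  have hcard : ∀ T ∈ Finset.powersetCard m (univ : Finset (Fin r)),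
      (Fintype.piFinset fun s => if s ∈ T then S else (univ : Finset (Fin ℓ))).card
        = S.card ^ m * ℓ ^ (r - m) := by
    intro T hT
    obtain ⟨-, hTcard⟩ := Finset.mem_powersetCard.mp hT
    rw [Fintype.card_piFinset]
    have h1 : ∀ s : Fin r, (if s ∈ T then S else (univ : Finset (Fin ℓ))).card
        = if s ∈ T then S.card else ℓ := by
      intro s; split <;> simp
    simp_rw [h1]
    rw [Finset.prod_ite, Finset.prod_const, Finset.prod_const]
    have h2 : (univ.filter fun s => s ∈ T) = T := Finset.filter_univ_mem T
    have h3 : (univ.filter fun s : Fin r => ¬ s ∈ T).card = r - m := by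
      rw [Finset.filter_not, Finset.filter_univ_mem,
        Finset.card_sdiff_of_subset (subset_univ T), card_univ, Fintype.card_fin, hTcard]
    rw [h2, hTcard, h3]
  calc _ ≤ _ := Finset.card_le_card hsub
    _ ≤ ∑ T ∈ Finset.powersetCard m (univ : Finset (Fin r)),
          (Fintype.piFinset fun s => if s ∈ T then S else univ).card := Finset.card_biUnion_le
    _ = ∑ _T ∈ Finset.powersetCard m (univ : Finset (Fin r)),
          S.card ^ m * ℓ ^ (r - m) := Finset.sum_congr rfl hcard
    _ = r.choose m * S.card ^ m * ℓ ^ (r-m) := by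
        rw [Finset.sum_const, Finset.card_powersetCard, card_univ, Fintype.card_fin,
          smul_eq_mul, mul_assoc]

private lemma card_filter_exists_le {α β : Type*} [Fintype α] [Fintype β] [DecidableEq α]
    (P : β → α → Prop) [∀ i a, Decidable (P i a)] :
    (univ.filter fun a : α => ∃ i : β, P i a).card ≤ ∑ i : β, (univ.filter fun a => P i a).card := by
  calc (univ.filter fun a : α => ∃ i : β, P i a).card
      ≤ ((univ : Finset β).biUnion fun i => univ.filter fun a => P i a).card := by
        apply Finset.card_le_card
        intro a ha
        simp only [mem_filter, mem_univ, true_and] at ha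
        obtain ⟨i, hi⟩ := ha
        exact Finset.mem_biUnion.mpr ⟨i, mem_univ i, mem_filter.mpr ⟨mem_univ a, hi⟩⟩
    _ ≤ _ := Finset.card_biUnion_le

set_option maxHeartbeats 1000000 in
private lemma per_term (L t : ℝ) (hL : 2 ≤ L) (ht : 0 < t) (ℓ r m B : ℕ) (hℓ : 1 ≤ ℓ)
    (hBl : B ≤ ℓ) (hBt : (B:ℝ) ≤ 2*t) (hrle : (r:ℝ) ≤ 8*ℓ*L/t + 1)
    (hm_gt : 64*L < (m:ℝ)) :
    ((r.choose m : ℝ) * (B:ℝ)^m * (ℓ:ℝ)^(r-m)) / (ℓ:ℝ)^r ≤ Real.exp (-L) := by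
  have hℓ0 : (0:ℝ) < ℓ := by exact_mod_cast hℓ
  have he : (0:ℝ) < Real.exp 1 := Real.exp_pos 1
  have he9 : Real.exp 1 < 2.7182818286 := Real.exp_one_lt_d9
  have hL0 : (0:ℝ) < L := by linarith
  have hm0 : (0:ℝ) < m := by linarith
  by_cases hmr : m ≤ r
  · -- rewrite LHS as choose * (B/ℓ)^m
    have heq : ((ℓ:ℝ))^r = (ℓ:ℝ)^(r-m) * (ℓ:ℝ)^m := by rw [← pow_add]; congr 1; omega
    have hrw : ((r.choose m : ℝ) * (B:ℝ)^m * (ℓ:ℝ)^(r-m)) / (ℓ:ℝ)^r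
        = (r.choose m : ℝ) * ((B:ℝ)/(ℓ:ℝ))^m := by
      rw [heq, div_pow]
      have h1 : ((ℓ:ℝ)^(r-m)) ≠ 0 := by positivity
      have h2 : ((ℓ:ℝ)^m) ≠ 0 := by positivity
      field_simp
    rw [hrw]
    -- choose bound
    have hfac0 : (0:ℝ) < (m.factorial : ℝ) := by exact_mod_cast m.factorial_pos
    have hcf : (m.factorial : ℝ) * (r.choose m) ≤ (r:ℝ)^m := by
      have := Nat.descFactorial_le_pow r m
      rw [Nat.descFactorial_eq_factorial_mul_choose] at this
      exact_mod_cast this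
    have hchoose : (r.choose m : ℝ) ≤ (r:ℝ)^m / (m.factorial : ℝ) := by
      rw [le_div_iff₀ hfac0]; linarith
    set p : ℝ := (B:ℝ)/(ℓ:ℝ) with hp
    have hp0 : 0 ≤ p := by positivity
    have hp1 : p ≤ 1 := by rw [hp, div_le_one hℓ0]; exact_mod_cast hBl
    set μ : ℝ := (r:ℝ) * p with hμdef
    have hμ0 : 0 ≤ μ := by positivity
    have hμ : μ ≤ 16*L + 1 := by
      have h1 : μ ≤ (8*(ℓ:ℝ)*L/t + 1) * p := mul_le_mul_of_nonneg_right hrle hp0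
      have h2 : (8*(ℓ:ℝ)*L/t) * p ≤ 16*L := by
        rw [hp, div_mul_div_comm, div_le_iff₀ (by positivity)]
        nlinarith [mul_le_mul_of_nonneg_left hBt (by positivity : (0:ℝ) ≤ 8*(ℓ:ℝ)*L)]
      nlinarith
    have step1 : (r.choose m : ℝ) * p^m ≤ μ^m / (m.factorial : ℝ) := by
      calc (r.choose m : ℝ) * p^m ≤ ((r:ℝ)^m / (m.factorial : ℝ)) * p^m :=
            mul_le_mul_of_nonneg_right hchoose (by positivity)
        _ = μ^m / (m.factorial : ℝ) := by rw [hμdef, mul_pow]; ring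
    have step2 : μ^m / (m.factorial : ℝ) ≤ (μ * Real.exp 1 / m)^m := by
      have hlow : (0:ℝ) < ((m:ℝ)/Real.exp 1)^m := by positivity
      have h1 : μ^m / (m.factorial : ℝ) ≤ μ^m / (((m:ℝ)/Real.exp 1)^m) :=
        div_le_div_of_nonneg_left (by positivity) hlow (pow_div_exp_le_factorial m)
      calc μ^m / (m.factorial : ℝ) ≤ μ^m / (((m:ℝ)/Real.exp 1)^m) := h1
        _ = (μ / ((m:ℝ)/Real.exp 1))^m := by rw [div_pow μ ((m:ℝ)/Real.exp 1) m]
        _ = (μ * Real.exp 1 / m)^m := by rw [div_div_eq_mul_div]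
    have step3 : μ * Real.exp 1 / m ≤ 0.71 := by
      rw [div_le_iff₀ hm0]
      have a1 : μ * Real.exp 1 ≤ (16*L+1) * Real.exp 1 :=
        mul_le_mul_of_nonneg_right hμ he.le
      have a2 : (16*L+1) * Real.exp 1 ≤ (16*L+1) * 2.7182818286 :=
        mul_le_mul_of_nonneg_left he9.le (by linarith)
      have a3 : (16*L+1) * (2.7182818286:ℝ) ≤ 0.71 * (64*L) := by nlinarith
      linarith
    have step4 : ((0.71:ℝ))^m ≤ Real.exp (-L) := by
      have h71 : (0.71:ℝ) ≤ Real.exp (-(3:ℝ)⁻¹) := by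
        have hcube : (Real.exp (-(3:ℝ)⁻¹))^(3:ℕ) = Real.exp (-1) := by
          rw [← Real.exp_nat_mul]; norm_num
        refine le_of_pow_le_pow_left₀ (n := 3) (by norm_num) (Real.exp_pos _).le ?_
        rw [hcube]
        calc (0.71:ℝ)^3 ≤ (2.7182818286:ℝ)⁻¹ := by norm_num
          _ ≤ (Real.exp 1)⁻¹ := by gcongr
          _ = Real.exp (-1) := (Real.exp_neg 1).symm
      calc ((0.71:ℝ))^m ≤ (Real.exp (-(3:ℝ)⁻¹))^m := pow_le_pow_left₀ (by norm_num) h71 m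
        _ = Real.exp ((m:ℝ) * (-(3:ℝ)⁻¹)) := (Real.exp_nat_mul _ m).symm
        _ ≤ Real.exp (-L) := by
            apply Real.exp_le_exp.mpr
            have : 3 * L ≤ 64 * L := by linarith
            have hm3 : 3 * L ≤ (m:ℝ) := by linarith
            linarith [mul_le_mul_of_nonneg_right hm3 (by norm_num : (0:ℝ) ≤ 3⁻¹)]
    calc (r.choose m : ℝ) * p^m ≤ μ^m / (m.factorial : ℝ) := step1
      _ ≤ (μ * Real.exp 1 / m)^m := step2
      _ ≤ ((0.71:ℝ))^m := pow_le_pow_left₀ (by positivity) step3 m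
      _ ≤ Real.exp (-L) := step4
  · rw [Nat.choose_eq_zero_of_lt (by omega)]
    simp
    positivity

/-- Sampling lemma, part 2 (Lemma 8 of LSZ21, second item): if each of
`x⁽¹⁾, …, x⁽ᵏ⁾ ∈ {0,1}^ℓ` has between `t/8` and `2t` ones, `ln(k/δ) ≥ 2`, and we
draw `r = ⌈8ℓ·ln(k/δ)/t⌉` independent uniform samples `f(1), …, f(r)` from
`{1,…,ℓ}`, then the probability (over the uniform choice of `f : Fin r → Fin ℓ`)
that some `x⁽ⁱ⁾` is hit more than `64·ln(k/δ)` times is at most `δ`. -/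
theorem sampling_few_hits (ℓ k : ℕ) (hℓ : 1 ≤ ℓ) (hk : 1 ≤ k)
    (t : ℝ) (ht : 0 < t) (δ : ℝ) (hδ0 : 0 < δ) (hδ1 : δ < 1)
    (hlog : 2 ≤ Real.log ((k : ℝ) / δ))
    (x : Fin k → Fin ℓ → Bool)
    (hlow : ∀ i, t / 8 ≤ ((Finset.univ.filter fun j => x i j = true).card : ℝ))
    (hhigh : ∀ i, ((Finset.univ.filter fun j => x i j = true).card : ℝ) ≤ 2 * t)
    (r : ℕ) (hr : r = ⌈8 * (ℓ : ℝ) * Real.log ((k : ℝ) / δ) / t⌉₊) :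
    (((Finset.univ.filter fun f : Fin r → Fin ℓ =>
          ∃ i : Fin k,
            64 * Real.log ((k : ℝ) / δ) <
              ((Finset.univ.filter fun s : Fin r => x i (f s) = true).card : ℝ)).card : ℝ)
        / ((ℓ : ℝ) ^ r)) ≤ δ := by

  set L := Real.log ((k : ℝ) / δ) with hLdef
  have hL0 : (0:ℝ) < L := by linarith
  have hk0 : (0:ℝ) < k := by exact_mod_cast hk
  have hℓ0 : (0:ℝ) < ℓ := by exact_mod_cast hℓ
  have hℓr : (0:ℝ) < (ℓ:ℝ)^r := by positivity
  have hδeq : δ = (k:ℝ) * Real.exp (-L) := by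
    have h1 : (k:ℝ)/δ = Real.exp L := (Real.exp_log (by positivity)).symm
    rw [Real.exp_neg, ← h1]
    field_simp
  set m : ℕ := ⌊64 * L⌋₊ + 1 with hmdef
  have hm_gt : 64 * L < (m:ℝ) := by
    rw [hmdef]; push_cast; exact Nat.lt_floor_add_one _
  have hrle : (r:ℝ) ≤ 8*(ℓ:ℝ)*L/t + 1 := by
    rw [hr]
    have h := Nat.ceil_lt_add_one (a := 8*(ℓ:ℝ)*L/t) (by positivity)
    linarith
  have hNi : ∀ i : Fin k,
      (((univ.filter fun f : Fin r → Fin ℓ =>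
          64 * L < ((univ.filter fun s : Fin r => x i (f s) = true).card : ℝ)).card : ℝ))
        ≤ Real.exp (-L) * (ℓ:ℝ)^r := by
    intro i
    set S : Finset (Fin ℓ) := univ.filter (fun j => x i j = true) with hS
    have hsub : (univ.filter fun f : Fin r → Fin ℓ =>
          64 * L < ((univ.filter fun s : Fin r => x i (f s) = true).card : ℝ))
        ⊆ (univ.filter fun f : Fin r → Fin ℓ => m ≤ (univ.filter fun s => f s ∈ S).card) := by
      intro f hf
      rw [mem_filter] at hf ⊢
      refine ⟨hf.1, ?_⟩
      have heqset : (univ.filter fun s : Fin r => f s ∈ S)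
          = (univ.filter fun s : Fin r => x i (f s) = true) := by
        ext s; simp [hS]
      rw [heqset, hmdef]
      have hfl : ⌊64*L⌋₊ < (univ.filter fun s : Fin r => x i (f s) = true).card :=
        (Nat.floor_lt (by positivity)).mpr hf.2
      omega
    have hBl : S.card ≤ ℓ := by
      calc S.card ≤ (univ : Finset (Fin ℓ)).card := card_le_card (subset_univ S)
        _ = ℓ := by rw [card_univ, Fintype.card_fin]
    have hB2t : ((S.card : ℕ) : ℝ) ≤ 2 * t := hhigh i
    have hcount := count_many_hits ℓ r m S
    have hpt := per_term L t hlog ht ℓ r m S.card hℓ hBl hB2t hrle hm_gt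
    calc (((univ.filter fun f : Fin r → Fin ℓ =>
          64 * L < ((univ.filter fun s : Fin r => x i (f s) = true).card : ℝ)).card : ℝ))
        ≤ ((univ.filter fun f : Fin r → Fin ℓ =>
            m ≤ (univ.filter fun s => f s ∈ S).card).card : ℝ) := by
          exact_mod_cast card_le_card hsub
      _ ≤ (r.choose m : ℝ) * (S.card:ℝ)^m * (ℓ:ℝ)^(r-m) := by exact_mod_cast hcount
      _ ≤ Real.exp (-L) * (ℓ:ℝ)^r := (div_le_iff₀ hℓr).mp hpt
  have hunion := card_filter_exists_le (α := Fin r → Fin ℓ) (β := Fin k)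
    (fun i f => 64 * L < ((univ.filter fun s : Fin r => x i (f s) = true).card : ℝ))
  rw [div_le_iff₀ hℓr]
  calc ((univ.filter fun f : Fin r → Fin ℓ =>
          ∃ i : Fin k, 64 * L <
            ((univ.filter fun s : Fin r => x i (f s) = true).card : ℝ)).card : ℝ)
      ≤ ∑ i : Fin k, ((univ.filter fun f : Fin r → Fin ℓ =>
          64 * L < ((univ.filter fun s : Fin r => x i (f s) = true).card : ℝ)).card : ℝ) := by
        exact_mod_cast hunion
    _ ≤ ∑ _i : Fin k, Real.exp (-L) * (ℓ:ℝ)^r := Finset.sum_le_sum (fun i _ => hNi i)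
    _ = (k:ℝ) * (Real.exp (-L) * (ℓ:ℝ)^r) := by
        rw [Finset.sum_const, card_univ, Fintype.card_fin, nsmul_eq_mul]
    _ = δ * (ℓ:ℝ)^r := by rw [hδeq]; ring
end
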